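/- arXiv:0807.4162 — 8 statements merged into one kernel-verified Lean document; each statement's English description precedes it below -/
import Mathlib

section
/- For each natural number n, the valuation of the n-th iterate satisfies v(f^n(a)) = M^n·v(a) + ((M^n − 1)/(M − 1))·v(λ). -/
private lemma geom_div_succ {M : ℕ} (hM : 2 ≤ M) (n : ℕ) :
    (M ^ (n + 1) - 1) / (M - 1) = M * ((M ^ n - 1) / (M - 1)) + 1 := by
  have hd : M - 1 ∣ M ^ n - 1 := by
    simpa using Nat.sub_dvd_pow_sub_pow M 1 n
  obtain ⟨k, hk⟩ := hd
  have h1 : 1 ≤ M ^ n := Nat.one_le_pow _ _ (by omega)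
  have hMn : M ^ n = (M - 1) * k + 1 := by omega
  have hpos : 0 < M - 1 := by omega
  obtain ⟨m, hm⟩ : ∃ m, M = m + 1 := ⟨M - 1, by omega⟩
  have hsucc : M ^ (n + 1) - 1 = (M - 1) * (M * k + 1) := by
    have he : M ^ (n + 1) = M * M ^ n := by ring
    rw [he, hMn]
    have key : M * ((M - 1) * k + 1) = (M - 1) * (M * k + 1) + 1 := by
      subst hm; simp only [Nat.add_sub_cancel]; ring
    omega
  rw [hsucc, hk, Nat.mul_div_cancel_left _ hpos, Nat.mul_div_cancel_left _ hpos]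

/-- superattracting case.  `f(x) = ∑_{i≥M} c_i x^i` with `M ≥ 2`,
coefficients in the valuation ring, `λ = c M ≠ 0`, `v(a) > v(λ) ≥ 0`.
Then `v(fⁿ(a)) = Mⁿ·v(a) + ((Mⁿ−1)/(M−1))·v(λ)`, multiplicatively
`‖fⁿ(a)‖ = ‖a‖^(Mⁿ) · ‖λ‖^((Mⁿ−1)/(M−1))` (the exponent is an exact natural
number division since `M ≥ 2`). -/
theorem iterate_valuation_superattracting
    {K : Type*} [NontriviallyNormedField K] [IsUltrametricDist K] [CompleteSpace K]
    (M : ℕ) (hM : 2 ≤ M)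
    (c : ℕ → K) (hlow : ∀ i < M, c i = 0) (hc : ∀ i, ‖c i‖ ≤ 1)
    (hconv : ∀ x : K, ‖x‖ ≤ 1 → Summable fun i => c i * x ^ i)
    (F : K → K) (hF : ∀ x, F x = ∑' i, c i * x ^ i)
    (hlam0 : c M ≠ 0)
    (a : K) (ha : ‖a‖ < ‖c M‖) :
    ∀ n : ℕ, ‖F^[n] a‖ = ‖a‖ ^ (M ^ n) * ‖c M‖ ^ ((M ^ n - 1) / (M - 1)) := by
  have hcM1 : ‖c M‖ ≤ 1 := hc M
  have hcMpos : 0 < ‖c M‖ := norm_pos_iff.mpr hlam0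
  -- key step lemma
  have step : ∀ x : K, ‖x‖ < ‖c M‖ → ‖F x‖ = ‖c M‖ * ‖x‖ ^ M := by
    intro x hx
    have hx1 : ‖x‖ ≤ 1 := le_of_lt (lt_of_lt_of_le hx hcM1)
    rcases eq_or_ne x 0 with rfl | hx0
    · rw [hF]
      have : (∑' i, c i * (0 : K) ^ i) = 0 := by
        rw [show (∑' i, c i * (0 : K) ^ i) = ∑' _ : ℕ, (0 : K) from tsum_congr fun i => ?_,
          tsum_zero]
        rcases Nat.eq_zero_or_pos i with rfl | hi
        · simp [hlow 0 (by omega)]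
        · simp [zero_pow hi.ne']
      rw [this]
      simp [zero_pow (by omega : M ≠ 0)]
    · have hxpos : 0 < ‖x‖ := norm_pos_iff.mpr hx0
      have hsum : Summable fun i => c i * x ^ i := hconv x hx1
      have hsplit : (∑ i ∈ Finset.range (M + 1), c i * x ^ i) +
          (∑' i, c (i + (M + 1)) * x ^ (i + (M + 1))) = ∑' i, c i * x ^ i :=
        Summable.sum_add_tsum_nat_add (M + 1) hsum
      have hhead : (∑ i ∈ Finset.range (M + 1), c i * x ^ i) = c M * x ^ M := by
        rw [Finset.sum_range_succ]
        have : ∀ i ∈ Finset.range M, c i * x ^ i = 0 := by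
          intro i hi
          simp [hlow i (Finset.mem_range.mp hi)]
        rw [Finset.sum_eq_zero this, zero_add]
      have htail : ‖∑' i, c (i + (M + 1)) * x ^ (i + (M + 1))‖ ≤ ‖x‖ ^ (M + 1) := by
        apply IsUltrametricDist.norm_tsum_le_of_forall_le_of_nonneg
          (by positivity)
        intro i
        rw [norm_mul, norm_pow]
        calc ‖c (i + (M + 1))‖ * ‖x‖ ^ (i + (M + 1))
            ≤ 1 * ‖x‖ ^ (i + (M + 1)) := by
              gcongr; exact hc _
          _ = ‖x‖ ^ (i + (M + 1)) := one_mul _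
          _ ≤ ‖x‖ ^ (M + 1) := pow_le_pow_of_le_one (le_of_lt hxpos) hx1 (by omega)
      have hdom : ‖x‖ ^ (M + 1) < ‖c M * x ^ M‖ := by
        rw [norm_mul, norm_pow, pow_succ']
        exact mul_lt_mul_of_pos_right hx (by positivity)
      have htail' : ‖∑' i, c (i + (M + 1)) * x ^ (i + (M + 1))‖ < ‖c M * x ^ M‖ :=
        lt_of_le_of_lt htail hdom
      have hne : ‖c M * x ^ M‖ ≠ ‖∑' i, c (i + (M + 1)) * x ^ (i + (M + 1))‖ :=
        (ne_of_gt htail')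
      have := IsUltrametricDist.norm_add_eq_max_of_norm_ne_norm hne
      rw [hF, ← hsplit, hhead, this, max_eq_left (le_of_lt htail'), norm_mul, norm_pow]
  -- strengthened induction
  have main : ∀ n : ℕ, ‖F^[n] a‖ = ‖a‖ ^ (M ^ n) * ‖c M‖ ^ ((M ^ n - 1) / (M - 1)) ∧
      ‖F^[n] a‖ < ‖c M‖ := by
    intro n
    induction n with
    | zero => simpa using ha
    | succ n ih =>
      obtain ⟨hval, hlt⟩ := ih
      have hstep : ‖F^[n + 1] a‖ = ‖c M‖ * ‖F^[n] a‖ ^ M := by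
        rw [Function.iterate_succ_apply']
        exact step _ hlt
      constructor
      · rw [hstep, hval, geom_div_succ hM n, mul_pow, ← pow_mul, ← pow_mul,
          pow_succ, pow_add]
        ring_nf
      · rw [hstep]
        have hFn1 : ‖F^[n] a‖ < 1 := lt_of_lt_of_le hlt hcM1
        have : ‖F^[n] a‖ ^ M < 1 :=
          pow_lt_one₀ (norm_nonneg _) hFn1 (by omega)
        calc ‖c M‖ * ‖F^[n] a‖ ^ M < ‖c M‖ * 1 :=
              mul_lt_mul_of_pos_left this hcMpos
          _ = ‖c M‖ := mul_one _
  exact fun n => (main n).1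
end

section
/- If b is an element of the valuation ring with |b| < |λ|, then |f(b)| = |λ·b^M|, i.e., v(f(b)) = v(λ) + M·v(b). -/
/-- if `‖b‖ ≤ 1` and `‖b‖ < ‖λ‖` then `‖f(b)‖ = ‖λ·b^M‖ = ‖λ‖·‖b‖^M`,
i.e. `v(f(b)) = v(λ) + M·v(b)`.  Here `f(x) = ∑_{i≥M} c_i x^i` with all `‖c i‖ ≤ 1`,
`λ = c M ≠ 0`, `‖λ‖ < 1`, converging on the closed unit ball of the complete
ultrametric field `K`. -/
theorem valuation_of_image_near_fixed_point
    {K : Type*} [NontriviallyNormedField K] [IsUltrametricDist K] [CompleteSpace K]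
    (M : ℕ) (hM : 1 ≤ M)
    (c : ℕ → K) (hlow : ∀ i < M, c i = 0) (hc : ∀ i, ‖c i‖ ≤ 1)
    (hconv : ∀ x : K, ‖x‖ ≤ 1 → Summable fun i => c i * x ^ i)
    (F : K → K) (hF : ∀ x, F x = ∑' i, c i * x ^ i)
    (hlam0 : c M ≠ 0) (hlam1 : ‖c M‖ < 1)
    (b : K) (hb1 : ‖b‖ ≤ 1) (hb : ‖b‖ < ‖c M‖) :
    ‖F b‖ = ‖c M‖ * ‖b‖ ^ M := by
  rcases eq_or_ne b 0 with rfl | hb0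
  · have : ∀ i, c i * (0:K) ^ i = 0 := by
      intro i
      rcases Nat.eq_zero_or_pos i with rfl | hi
      · simp [hlow 0 hM]
      · simp [zero_pow (Nat.pos_iff_ne_zero.mp hi)]
    rw [hF]
    simp [this, zero_pow (Nat.pos_iff_ne_zero.mp hM)]
  · have hbpos : 0 < ‖b‖ := norm_pos_iff.mpr hb0
    rw [hF, Summable.tsum_eq_add_tsum_ite (hconv b hb1) M]
    set R := ∑' i, if i = M then 0 else c i * b ^ i with hR
    have hmain : ‖c M * b ^ M‖ = ‖c M‖ * ‖b‖ ^ M := by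
      rw [norm_mul, norm_pow]
    have hRle : ‖R‖ ≤ ‖b‖ ^ (M + 1) := by
      apply IsUltrametricDist.norm_tsum_le_of_forall_le_of_nonneg
        (by positivity)
      intro i
      rcases eq_or_ne i M with rfl | hiM
      · simp
      · simp only [if_neg hiM]
        rcases lt_or_ge i M with hlt | hge
        · simp [hlow i hlt]
        · have hgt : M + 1 ≤ i := lt_of_le_of_ne hge (Ne.symm hiM)
          calc ‖c i * b ^ i‖ ≤ 1 * ‖b‖ ^ i := by
                rw [norm_mul, norm_pow]
                exact mul_le_mul_of_nonneg_right (hc i) (by positivity)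
            _ = ‖b‖ ^ i := one_mul _
            _ ≤ ‖b‖ ^ (M + 1) := pow_le_pow_of_le_one (norm_nonneg b) hb1 hgt
    have hRlt : ‖R‖ < ‖c M * b ^ M‖ := by
      refine hRle.trans_lt ?_
      rw [hmain, pow_succ, mul_comm (‖c M‖)]
      exact mul_lt_mul_of_pos_left hb (by positivity)
    rw [IsUltrametricDist.norm_add_eq_max_of_norm_ne_norm (ne_of_gt hRlt),
      max_eq_left hRlt.le, hmain]
end

section
/- There exists a formal power series h(x) = x + Σ_{j≥2} h_j x^j with coefficients in K such that h(f(x)) = λ·h(x) as formal power series, and moreover |h_j| ≤ |λ|^{1−j} for all j ≥ 1. -/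
/-- Formal composition `h ∘ f` of one-variable power series; it agrees with
substitution of `f` into `h` when `f` has zero constant term (in that case
`coeff N (f ^ j) = 0` for `j > N`, so the sum below is the full sum). -/
noncomputable def PowerSeries.formalComp {K : Type*} [CommRing K]
    (h f : PowerSeries K) : PowerSeries K :=
  PowerSeries.mk fun N =>
    ∑ j ∈ Finset.range (N + 1), PowerSeries.coeff j h * PowerSeries.coeff N (f ^ j)

/-!
Comparing the coefficients of `xᴺ` in `h(f(x)) = λ h(x)`, the term `j = N` of the left side is
`h_N λᴺ` and all others involve only `h_j` with `j < N`, so `h_N (λ - λᴺ)` is determined by the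
lower coefficients. This defines `h` recursively as soon as `λᴺ ≠ λ` for `N ≥ 2`. In the
ultrametric case `‖λ - λᴺ‖ = ‖λ‖`, and since the powers of `f` have coefficients of norm at most
`1`, each recursion step costs exactly one factor `‖λ‖⁻¹`, giving `‖h_N‖ ≤ ‖λ‖^(1 - N)`.
-/

open Finset

theorem IsUltrametricDist.norm_sub_eq_left_of_norm_lt {E : Type*} [SeminormedAddCommGroup E]
    [IsUltrametricDist E] {a b : E} (h : ‖b‖ < ‖a‖) : ‖a - b‖ = ‖a‖ := by
  rw [sub_eq_add_neg, norm_add_eq_max_of_norm_ne_norm (by rw [norm_neg]; exact h.ne'), norm_neg,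
    max_eq_left h.le]

theorem norm_sub_pow_eq_norm {K : Type*} [NormedDivisionRing K] [IsUltrametricDist K] {a : K}
    (h0 : 0 < ‖a‖) (h1 : ‖a‖ < 1) {n : ℕ} (hn : 2 ≤ n) : ‖a - a ^ n‖ = ‖a‖ :=
  IsUltrametricDist.norm_sub_eq_left_of_norm_lt <| by
    rw [norm_pow]; exact pow_lt_self_of_lt_one₀ h0 h1 hn

namespace PowerSeries

theorem coeff_pow_self {R : Type*} [CommSemiring R] {f : R⟦X⟧} (hf : coeff 0 f = 0) (j : ℕ) :
    coeff j (f ^ j) = coeff 1 f ^ j := by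
  obtain ⟨g, rfl⟩ : X ∣ f := X_dvd_iff.mpr (by rwa [← coeff_zero_eq_constantCoeff_apply])
  simp [mul_pow, coeff_X_pow_mul']

section SeminormedRing

variable {R : Type*} [SeminormedRing R] [IsUltrametricDist R]

theorem norm_coeff_mul_le {f g : R⟦X⟧} {a b : ℝ} (hf : ∀ i, ‖coeff i f‖ ≤ a)
    (hg : ∀ i, ‖coeff i g‖ ≤ b) (n : ℕ) : ‖coeff n (f * g)‖ ≤ a * b := by
  have ha : 0 ≤ a := (norm_nonneg _).trans (hf 0)
  have hb : 0 ≤ b := (norm_nonneg _).trans (hg 0)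
  rw [coeff_mul]
  refine IsUltrametricDist.norm_sum_le_of_forall_le_of_nonneg (mul_nonneg ha hb) fun p _ => ?_
  exact (norm_mul_le _ _).trans (mul_le_mul (hf _) (hg _) (norm_nonneg _) ha)

theorem norm_coeff_pow_le_one [NormOneClass R] {f : R⟦X⟧} (hf : ∀ i, ‖coeff i f‖ ≤ 1)
    (j n : ℕ) : ‖coeff n (f ^ j)‖ ≤ 1 := by
  induction j generalizing n with
  | zero => rw [pow_zero, coeff_one]; split_ifs <;> simp
  | succ j ih => simpa only [pow_succ, mul_one] using norm_coeff_mul_le ih hf n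

end SeminormedRing

section Field

variable {K : Type*} [Field K]

noncomputable def koenigsCoeff (f : K⟦X⟧) : ℕ → K
  | 0 => 0
  | 1 => 1
  | N + 2 => (∑ j ∈ (range (N + 2)).attach, koenigsCoeff f j * coeff (N + 2) (f ^ (j : ℕ))) /
      (coeff 1 f - coeff 1 f ^ (N + 2))
  decreasing_by exact mem_range.mp j.2

noncomputable def koenigs (f : K⟦X⟧) : K⟦X⟧ := mk (koenigsCoeff f)

@[simp] theorem coeff_zero_koenigs (f : K⟦X⟧) : coeff 0 (koenigs f) = 0 := by
  simp [koenigs, koenigsCoeff]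

@[simp] theorem coeff_one_koenigs (f : K⟦X⟧) : coeff 1 (koenigs f) = 1 := by
  simp [koenigs, koenigsCoeff]

theorem coeff_koenigs_add_two (f : K⟦X⟧) (N : ℕ) :
    coeff (N + 2) (koenigs f) =
      (∑ j ∈ range (N + 2), coeff j (koenigs f) * coeff (N + 2) (f ^ j)) /
        (coeff 1 f - coeff 1 f ^ (N + 2)) := by
  simp only [koenigs, coeff_mk]
  rw [koenigsCoeff, sum_attach (range (N + 2)) fun j => koenigsCoeff f j * coeff (N + 2) (f ^ j)]

theorem formalComp_koenigs {f : K⟦X⟧} (hf : coeff 0 f = 0)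
    (hf1 : ∀ n, 2 ≤ n → coeff 1 f ^ n ≠ coeff 1 f) :
    (koenigs f).formalComp f = C (coeff 1 f) * koenigs f := by
  ext N
  rw [formalComp, coeff_mk, coeff_C_mul]
  match N with
  | 0 => simp
  | 1 => simp [sum_range_succ]
  | N + 2 =>
    have hden : coeff 1 f - coeff 1 f ^ (N + 2) ≠ 0 := sub_ne_zero.mpr (hf1 _ le_add_self).symm
    rw [sum_range_succ, coeff_pow_self hf, ← div_mul_cancel₀ (∑ j ∈ range (N + 2), _) hden,
      ← coeff_koenigs_add_two]
    ring

end Field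

theorem norm_coeff_koenigs_le {K : Type*} [NormedField K] [IsUltrametricDist K] {f : K⟦X⟧}
    (hf : ∀ i, ‖coeff i f‖ ≤ 1) (h0 : 0 < ‖coeff 1 f‖) (h1 : ‖coeff 1 f‖ < 1) (N : ℕ) :
    ‖coeff N (koenigs f)‖ ≤ ‖coeff 1 f‖ ^ (1 - (N : ℤ)) := by
  set l := ‖coeff 1 f‖
  induction N using Nat.strong_induction_on with
  | _ N ih =>
  match N with
  | 0 => simp [h0.le]
  | 1 => simp
  | N + 2 =>
    have hsum : ‖∑ j ∈ range (N + 2), coeff j (koenigs f) * coeff (N + 2) (f ^ j)‖ ≤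
        l ^ (-(N : ℤ)) := by
      refine IsUltrametricDist.norm_sum_le_of_forall_le_of_nonneg (zpow_nonneg h0.le _)
        fun j hj => ?_
      have hj : j < N + 2 := mem_range.mp hj
      calc _ ≤ ‖coeff j (koenigs f)‖ * 1 := by
              rw [norm_mul]; gcongr; exact norm_coeff_pow_le_one hf _ _
        _ ≤ l ^ (1 - (j : ℤ)) := by rw [mul_one]; exact ih j (by omega)
        _ ≤ l ^ (-(N : ℤ)) := zpow_le_zpow_right_of_le_one₀ h0 h1.le (by omega)
    rw [coeff_koenigs_add_two, norm_div, norm_sub_pow_eq_norm h0 h1 le_add_self]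
    calc _ ≤ l ^ (-(N : ℤ)) / l := by gcongr
      _ = l ^ (1 - ((N + 2 : ℕ) : ℤ)) := by
        rw [div_eq_mul_inv, ← zpow_sub_one₀ h0.ne']; push_cast; ring_nf

end PowerSeries

theorem exists_formal_koenigs_linearization_general
    {K : Type*} [NontriviallyNormedField K] [IsUltrametricDist K]
    (f : PowerSeries K) (hf0 : PowerSeries.coeff 0 f = 0)
    (hf : ∀ i, ‖PowerSeries.coeff i f‖ ≤ 1)
    (hlam0 : 0 < ‖PowerSeries.coeff 1 f‖) (hlam1 : ‖PowerSeries.coeff 1 f‖ < 1) :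
    ∃ h : PowerSeries K,
      PowerSeries.coeff 0 h = 0 ∧ PowerSeries.coeff 1 h = 1 ∧
      (∀ j : ℕ, 1 ≤ j → ‖PowerSeries.coeff j h‖ ≤ ‖PowerSeries.coeff 1 f‖ ^ (1 - (j : ℤ))) ∧
      PowerSeries.formalComp h f = PowerSeries.C (PowerSeries.coeff 1 f) * h :=
  ⟨PowerSeries.koenigs f, PowerSeries.coeff_zero_koenigs f, PowerSeries.coeff_one_koenigs f,
    fun j _ => PowerSeries.norm_coeff_koenigs_le hf hlam0 hlam1 j,
    PowerSeries.formalComp_koenigs hf0 fun _ hn h =>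
      hlam0.ne (by simpa [h] using norm_sub_pow_eq_norm hlam0 hlam1 hn)⟩

/-- formal Koenigs linearization with coefficient bounds:
for `f(x) = ∑_{i≥1} f_i x^i` with all `‖f_i‖ ≤ 1`, `λ = f₁`, `0 < ‖λ‖ < 1`,
there is a formal power series `h(x) = x + ∑_{j≥2} h_j x^j` with
`h(f(x)) = λ·h(x)` and `‖h_j‖ ≤ ‖λ‖^(1−j)` for all `j ≥ 1`. -/
theorem exists_formal_koenigs_linearization
    {K : Type*} [NontriviallyNormedField K] [IsUltrametricDist K] [CompleteSpace K]
    (f : PowerSeries K) (hf0 : PowerSeries.coeff 0 f = 0)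
    (hf : ∀ i, ‖PowerSeries.coeff i f‖ ≤ 1)
    (hlam0 : 0 < ‖PowerSeries.coeff 1 f‖) (hlam1 : ‖PowerSeries.coeff 1 f‖ < 1) :
    ∃ h : PowerSeries K,
      PowerSeries.coeff 0 h = 0 ∧ PowerSeries.coeff 1 h = 1 ∧
      (∀ j : ℕ, 1 ≤ j → ‖PowerSeries.coeff j h‖ ≤ ‖PowerSeries.coeff 1 f‖ ^ (1 - (j : ℤ))) ∧
      PowerSeries.formalComp h f = PowerSeries.C (PowerSeries.coeff 1 f) * h :=
  exists_formal_koenigs_linearization_general f hf0 hf hlam0 hlam1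
end

section
/- There exists a formal power series h(x) = x + Σ_{j≥2} h_j x^j over K such that h(f(x)) = λ·(h(x))^M as formal power series. -/
/-!
Compare the coefficients of `x^(n+M-1)` in `h ∘ f = λ h^M` for `n ≥ 2`. Since `f^j` has order
`M j > n + M - 1` for `j ≥ n`, the left side depends only on `h_0, …, h_(n-1)`. On the right,
writing `h = T + R` with `T` the truncation below degree `n` and `X^n ∣ R`, the difference
`h^M - T^M = R · ∑ h^i T^(M-1-i)` contributes exactly `M h_n`. Hence the equation reads
`λ (M h_n + [x^(n+M-1)] T^M) = [x^(n+M-1)] (T ∘ f)`, which determines `h_n` recursively because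
`M λ ≠ 0` in characteristic zero. The coefficients below `x^M` and at `x^M` hold because
`h_0 = 0` and `h_1 = 1`.
-/

open PowerSeries Finset

namespace PowerSeries

variable {R : Type*} [CommRing R]

theorem coeff_add_mul_of_X_pow_dvd {a b : ℕ} {φ ψ : R⟦X⟧} (hφ : X ^ a ∣ φ) (hψ : X ^ b ∣ ψ) :
    coeff (a + b) (φ * ψ) = coeff a φ * coeff b ψ := by
  obtain ⟨φ, rfl⟩ := hφ
  obtain ⟨ψ, rfl⟩ := hψ
  rw [mul_mul_mul_comm, ← pow_add]
  simp [coeff_X_pow_mul', coeff_zero_eq_constantCoeff]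

theorem coeff_pow_self_of_constantCoeff_eq_zero {φ : R⟦X⟧} (hφ : constantCoeff φ = 0) (k : ℕ) :
    coeff k (φ ^ k) = coeff 1 φ ^ k := by
  have hX : X ∣ φ := X_dvd_iff.mpr hφ
  induction k with
  | zero => simp
  | succ k ih =>
    rw [pow_succ, coeff_add_mul_of_X_pow_dvd (pow_dvd_pow_of_dvd hX k) (by rwa [pow_one]), ih,
      pow_succ]

theorem X_pow_dvd_sub_trunc (n : ℕ) (φ : R⟦X⟧) : X ^ n ∣ φ - (trunc n φ : R⟦X⟧) :=
  X_pow_dvd_iff.mpr fun i hi => by simp [Polynomial.coeff_coe, coeff_trunc, hi]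

theorem coeff_pow_sub_pow_of_X_pow_dvd_sub {φ ψ : R⟦X⟧} (hφ : constantCoeff φ = 0)
    (hψ : constantCoeff ψ = 0) (h1 : coeff 1 φ = coeff 1 ψ) {n : ℕ} (hn : X ^ n ∣ φ - ψ)
    (m : ℕ) :
    coeff (n + m) (φ ^ (m + 1) - ψ ^ (m + 1)) = (m + 1) * coeff 1 φ ^ m * coeff n (φ - ψ) := by
  set G := ∑ i ∈ range (m + 1), φ ^ i * ψ ^ (m - i)
  have hXφ (i : ℕ) : X ^ i ∣ φ ^ i := pow_dvd_pow_of_dvd (X_dvd_iff.mpr hφ) i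
  have hXψ (i : ℕ) : X ^ i ∣ ψ ^ i := pow_dvd_pow_of_dvd (X_dvd_iff.mpr hψ) i
  have hG : X ^ m ∣ G := by
    refine dvd_sum fun i hi => ?_
    obtain ⟨k, rfl⟩ := Nat.exists_eq_add_of_le (mem_range_succ_iff.mp hi)
    rw [Nat.add_sub_cancel_left, pow_add]
    exact mul_dvd_mul (hXφ i) (hXψ k)
  have hGm : coeff m G = (m + 1) * coeff 1 φ ^ m := by
    have hterm : ∀ i ∈ range (m + 1), coeff m (φ ^ i * ψ ^ (m - i)) = coeff 1 φ ^ m := by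
      intro i hi
      obtain ⟨k, rfl⟩ := Nat.exists_eq_add_of_le (mem_range_succ_iff.mp hi)
      rw [Nat.add_sub_cancel_left, coeff_add_mul_of_X_pow_dvd (hXφ i) (hXψ k),
        coeff_pow_self_of_constantCoeff_eq_zero hφ, coeff_pow_self_of_constantCoeff_eq_zero hψ,
        ← h1, pow_add]
    rw [map_sum, sum_congr rfl hterm, sum_const, card_range, nsmul_eq_mul]
    push_cast
    ring
  have hfactor := geom_sum₂_mul φ ψ (m + 1)
  simp only [Nat.add_sub_cancel] at hfactor
  rw [← hfactor, mul_comm, coeff_add_mul_of_X_pow_dvd hn hG, hGm]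
  ring

theorem formalComp_zero (f : R⟦X⟧) : formalComp 0 f = 0 := by
  ext N
  simp [formalComp]

theorem formalComp_X {f : R⟦X⟧} (hf : constantCoeff f = 0) : formalComp X f = f := by
  ext N
  rcases N with _ | N
  · simp [formalComp, hf]
  · simp [formalComp, coeff_X]

theorem coeff_formalComp_trunc {f : R⟦X⟧} {M n N : ℕ} (hf : X ^ M ∣ f) (hN : N < M * n)
    (h : R⟦X⟧) : coeff N (formalComp (trunc n h) f) = coeff N (formalComp h f) := by
  simp only [formalComp, coeff_mk]
  refine sum_congr rfl fun j _ => ?_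
  rw [Polynomial.coeff_coe, coeff_trunc]
  split_ifs with hj
  · rfl
  · have hfj : X ^ (M * j) ∣ f ^ j := pow_mul (X : R⟦X⟧) M j ▸ pow_dvd_pow_of_dvd hf j
    rw [X_pow_dvd_iff.mp hfj N (hN.trans_le (Nat.mul_le_mul_left M (not_lt.mp hj)))]
    simp

theorem formalComp_eq_C_mul_pow {f h : R⟦X⟧} {M : ℕ} (hM : 2 ≤ M) (hf : X ^ M ∣ f)
    (h0 : coeff 0 h = 0) (h1 : coeff 1 h = 1)
    (hrec : ∀ n, coeff (n + 1 + M) (formalComp (trunc (n + 2) h) f) =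
      coeff M f * (M * coeff (n + 2) h + coeff (n + 1 + M) ((trunc (n + 2) h : R⟦X⟧) ^ M))) :
    formalComp h f = C (coeff M f) * h ^ M := by
  obtain ⟨m, rfl⟩ : ∃ m, M = m + 1 := ⟨M - 1, by omega⟩
  rw [coeff_zero_eq_constantCoeff_apply] at h0
  ext N
  rw [coeff_C_mul]
  rcases lt_trichotomy N (m + 1) with hN | rfl | hN
  · have hhM : X ^ (m + 1) ∣ h ^ (m + 1) := pow_dvd_pow_of_dvd (X_dvd_iff.mpr h0) _
    rw [← coeff_formalComp_trunc hf (n := 1) (by omega), trunc_one_left,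
      coeff_zero_eq_constantCoeff_apply, h0, X_pow_dvd_iff.mp hhM N hN]
    simp [formalComp_zero]
  · have htrunc : (trunc 2 h : R⟦X⟧) = X := by
      ext (_ | _ | k) <;> simp [coeff_trunc, coeff_X, h0, h1]
    rw [← coeff_formalComp_trunc hf (n := 2) (by omega), htrunc,
      formalComp_X (X_dvd_iff.mp ((dvd_pow_self X (by omega)).trans hf)),
      coeff_pow_self_of_constantCoeff_eq_zero h0, h1, one_pow, mul_one]
  · obtain ⟨n, rfl⟩ : ∃ n, N = n + 1 + (m + 1) := ⟨N - m - 2, by omega⟩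
    set T : R⟦X⟧ := ↑(trunc (n + 2) h)
    have hT0 : constantCoeff T = 0 := by
      rw [← coeff_zero_eq_constantCoeff_apply, coeff_coe_trunc_of_lt (by omega),
        coeff_zero_eq_constantCoeff_apply, h0]
    have hT1 : coeff 1 h = coeff 1 T := (coeff_coe_trunc_of_lt (by omega)).symm
    have hlin := coeff_pow_sub_pow_of_X_pow_dvd_sub h0 hT0 hT1 (X_pow_dvd_sub_trunc _ _) m
    rw [← coeff_formalComp_trunc hf (n := n + 2) (by nlinarith), hrec,
      ← sub_add_cancel (h ^ (m + 1)) (T ^ (m + 1)), map_add,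
      show n + 1 + (m + 1) = n + 2 + m by ring, hlin]
    simp [T, coeff_trunc, h1]

end PowerSeries

section Boettcher

variable {K : Type*} [Field K]

noncomputable def boettcherCoeff (f : K⟦X⟧) (M : ℕ) : ℕ → K
  | 0 => 0
  | 1 => 1
  | n + 2 =>
    let T : K⟦X⟧ := mk fun j => if j < n + 2 then boettcherCoeff f M j else 0
    (M * coeff M f)⁻¹ *
      (coeff (n + 1 + M) (formalComp T f) - coeff M f * coeff (n + 1 + M) (T ^ M))

noncomputable def boettcherSeries (f : K⟦X⟧) (M : ℕ) : K⟦X⟧ :=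
  mk (boettcherCoeff f M)

theorem coeff_zero_boettcherSeries (f : K⟦X⟧) (M : ℕ) : coeff 0 (boettcherSeries f M) = 0 := by
  simp [boettcherSeries, boettcherCoeff]

theorem coeff_one_boettcherSeries (f : K⟦X⟧) (M : ℕ) : coeff 1 (boettcherSeries f M) = 1 := by
  simp [boettcherSeries, boettcherCoeff]

theorem coeff_boettcherSeries_add_two (f : K⟦X⟧) (M n : ℕ) :
    coeff (n + 2) (boettcherSeries f M) =
      (M * coeff M f)⁻¹ *
        (coeff (n + 1 + M) (formalComp (trunc (n + 2) (boettcherSeries f M)) f) -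
          coeff M f * coeff (n + 1 + M) ((trunc (n + 2) (boettcherSeries f M) : K⟦X⟧) ^ M)) := by
  have hT : (trunc (n + 2) (boettcherSeries f M) : K⟦X⟧) =
      mk fun j => if j < n + 2 then boettcherCoeff f M j else 0 := by
    ext j
    simp [coeff_trunc, boettcherSeries]
  rw [hT, boettcherSeries, coeff_mk, boettcherCoeff]

end Boettcher

theorem exists_formal_boettcher_normal_form_general
    {K : Type*} [NontriviallyNormedField K] [CharZero K]
    (M : ℕ) (hM : 2 ≤ M)
    (f : PowerSeries K) (hlow : ∀ i < M, PowerSeries.coeff i f = 0)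
    (hlam0 : PowerSeries.coeff M f ≠ 0) :
    ∃ h : PowerSeries K,
      PowerSeries.coeff 0 h = 0 ∧ PowerSeries.coeff 1 h = 1 ∧
      PowerSeries.formalComp h f = PowerSeries.C (PowerSeries.coeff M f) * h ^ M := by
  have hM0 : (M : K) ≠ 0 := Nat.cast_ne_zero.mpr (by omega)
  refine ⟨boettcherSeries f M, coeff_zero_boettcherSeries f M, coeff_one_boettcherSeries f M,
    formalComp_eq_C_mul_pow hM (X_pow_dvd_iff.mpr hlow) (coeff_zero_boettcherSeries f M)
      (coeff_one_boettcherSeries f M) fun n => ?_⟩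
  rw [coeff_boettcherSeries_add_two]
  field_simp
  ring

/-- formal Böttcher-type normal form at a superattracting fixed
point: over a complete valued field `K` of characteristic zero, if
`f(x) = ∑_{i≥M} f_i x^i` with `M ≥ 2`, all `‖f_i‖ ≤ 1` and `λ = f_M ≠ 0`, then
there is a formal power series `h(x) = x + ∑_{j≥2} h_j x^j` with
`h(f(x)) = λ·(h(x))^M`. -/
theorem exists_formal_boettcher_normal_form
    {K : Type*} [NontriviallyNormedField K] [CharZero K] [CompleteSpace K]
    (M : ℕ) (hM : 2 ≤ M)
    (f : PowerSeries K) (hlow : ∀ i < M, PowerSeries.coeff i f = 0)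
    (hf : ∀ i, ‖PowerSeries.coeff i f‖ ≤ 1)
    (hlam0 : PowerSeries.coeff M f ≠ 0) :
    ∃ h : PowerSeries K,
      PowerSeries.coeff 0 h = 0 ∧ PowerSeries.coeff 1 h = 1 ∧
      PowerSeries.formalComp h f = PowerSeries.C (PowerSeries.coeff M f) * h ^ M :=
  exists_formal_boettcher_normal_form_general M hM f hlow hlam0
end

section
/- Let Γ = M^ℤ = {M^k : k ∈ ℤ} ⊆ ℚ^× for an integer M ≥ 2. For any nonzero linear polynomial L(x) = Σ_{i=1}^n c_i x_i with rational coefficients and any c ∈ ℚ, the solution set {(γ_1,…,γ_n) ∈ Γ^n : L(γ) = c} is a finite union of sets each defined by finitely many equations of the form x_i = γ (γ ∈ Γ) and x_j = δ·x_k (δ ∈ Γ). -/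
/-!
Clear denominators so that the coefficients are integers, and induct on the support `s` of
`∑ i ∈ s, c i * x i = b`. For `b = 0`, dividing by `x i₀` gives an inhomogeneous equation on
`s.erase i₀`. For `b ≠ 0`, write `x i = M ^ k i` with top exponent `K`. Either `K` lies in a finite
range depending only on `b` and `c`, which pins down one coordinate, or by pigeonhole some window
`(L - G, L)` with `K - #s * G ≤ L ≤ K` contains no exponent, where `M ^ G > 2 ∑ |c i|`. Then the
terms with `k i ≥ L` sum to `M ^ L` times an integer of absolute value `< 1`: a vanishing proper
subsum, splitting the equation into two with smaller supports.
-/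

def cyclicPowers (M : ℕ) : Set ℚ := {q : ℚ | ∃ k : ℤ, q = (M : ℚ) ^ k}

open Finset

namespace cyclicPowers

variable {M : ℕ} {q r : ℚ}

theorem zpow_mem (k : ℤ) : (M : ℚ) ^ k ∈ cyclicPowers M := ⟨k, rfl⟩

theorem ne_zero (hM : M ≠ 0) (hq : q ∈ cyclicPowers M) : q ≠ 0 := by
  obtain ⟨k, rfl⟩ := hq
  exact zpow_ne_zero k (Nat.cast_ne_zero.2 hM)

theorem div_mem (hM : M ≠ 0) (hq : q ∈ cyclicPowers M) (hr : r ∈ cyclicPowers M) :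
    q / r ∈ cyclicPowers M := by
  obtain ⟨k, rfl⟩ := hq
  obtain ⟨l, rfl⟩ := hr
  exact ⟨k - l, by rw [zpow_sub₀ (Nat.cast_ne_zero.2 hM)]⟩

end cyclicPowers

section Gap

variable {ι : Type*}

theorem abs_sum_mul_zpow_le {x : ℚ} (hx : 1 ≤ x) (c : ι → ℚ) (k : ι → ℤ) {s : Finset ι} {K : ℤ}
    (hK : ∀ i ∈ s, k i ≤ K) : |∑ i ∈ s, c i * x ^ k i| ≤ (∑ i ∈ s, |c i|) * x ^ K := by
  have hx0 : 0 < x := by positivity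
  calc |∑ i ∈ s, c i * x ^ k i| ≤ ∑ i ∈ s, |c i * x ^ k i| := abs_sum_le_sum_abs _ _
    _ ≤ ∑ i ∈ s, |c i| * x ^ K := by
      gcongr with i hi
      rw [abs_mul, abs_of_pos (zpow_pos hx0 _)]
      gcongr
      exact hK i hi
    _ = (∑ i ∈ s, |c i|) * x ^ K := by rw [sum_mul]

theorem exists_le_card_gap (s : Finset ι) (k : ι → ℤ) (K : ℤ) (G : ℕ) :
    ∃ j ≤ #s, ∀ i ∈ s, k i < K - j * G → k i + G ≤ K - j * G := by
  rcases G.eq_zero_or_pos with rfl | hG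
  · exact ⟨0, Nat.zero_le _, fun i _ h => by simpa using h.le⟩
  -- `k i` in the window `(K - (j + 1) G, K - j G)` has `(K - k i) / G = j`
  obtain ⟨j, hj, hjk⟩ := exists_mem_notMem_of_card_lt_card
    (s := s.image fun i => ((K - k i) / G).toNat) (t := range (#s + 1))
    (card_image_le.trans_lt (by simp))
  refine ⟨j, Nat.lt_succ_iff.mp (mem_range.mp hj), fun i hi hlt => ?_⟩
  by_contra! hgt
  have hG' : (0 : ℤ) < G := by exact_mod_cast hG
  have hlo : (j : ℤ) ≤ (K - k i) / G := (Int.le_ediv_iff_mul_le hG').2 (by linarith)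
  have hhi : (K - k i) / G < j + 1 := (Int.ediv_lt_iff_lt_mul hG').2 (by linarith)
  exact hjk (mem_image.2 ⟨i, hi, by omega⟩)
theorem sum_mul_zpow_eq_zero_of_gap {M : ℕ} (hM : 0 < M) (c k : ι → ℤ) {s : Finset ι} {b : ℚ}
    (hsum : ∑ i ∈ s, c i * (M : ℚ) ^ k i = b) {L : ℤ} {G : ℕ}
    (hgap : ∀ i ∈ s, k i < L → k i + G ≤ L) (hb : 2 * |b| < (M : ℚ) ^ L)
    (hc : 2 * ∑ i ∈ s, |(c i : ℚ)| < (M : ℚ) ^ G) :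
    ∑ i ∈ s with L ≤ k i, c i * (M : ℚ) ^ k i = 0 := by
  have hM1 : (1 : ℚ) ≤ M := by exact_mod_cast hM
  have hM0 : (M : ℚ) ≠ 0 := by positivity
  have hML : 0 < (M : ℚ) ^ L := zpow_pos (by positivity) L
  -- the upper part is `M ^ L` times an integer
  set N : ℤ := ∑ i ∈ s with L ≤ k i, c i * (M : ℤ) ^ (k i - L).toNat
  have hN : (N : ℚ) * (M : ℚ) ^ L = ∑ i ∈ s with L ≤ k i, c i * (M : ℚ) ^ k i := by
    push_cast [N, sum_mul]
    refine sum_congr rfl fun i hi => ?_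
    rw [mul_assoc, ← zpow_natCast, ← zpow_add₀ hM0,
      Int.toNat_of_nonneg (sub_nonneg.2 (mem_filter.1 hi).2), sub_add_cancel]
  have hrest : |∑ i ∈ s with ¬L ≤ k i, c i * (M : ℚ) ^ k i|
      ≤ (∑ i ∈ s, |(c i : ℚ)|) * (M : ℚ) ^ (L - G) := by
    refine (abs_sum_mul_zpow_le hM1 _ k (K := L - G) fun i hi => ?_).trans ?_
    · obtain ⟨his, hik⟩ := mem_filter.1 hi
      linarith [hgap i his (not_le.1 hik)]
    · gcongr
      exact filter_subset _ s
  have hrest_lt : 2 * ((∑ i ∈ s, |(c i : ℚ)|) * (M : ℚ) ^ (L - G)) < (M : ℚ) ^ L := by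
    rw [zpow_sub₀ hM0, zpow_natCast, ← mul_assoc, mul_div_assoc']
    rw [div_lt_iff₀ (by positivity)]
    nlinarith
  have hsplit := sum_filter_add_sum_filter_not s (L ≤ k ·) fun i => c i * (M : ℚ) ^ k i
  have hNlt : |(N : ℚ)| * (M : ℚ) ^ L < 1 * (M : ℚ) ^ L := by
    calc |(N : ℚ)| * (M : ℚ) ^ L = |b - ∑ i ∈ s with ¬L ≤ k i, c i * (M : ℚ) ^ k i| := by
          rw [← abs_of_pos hML, ← abs_mul, hN, ← hsum, ← hsplit, add_sub_cancel_right]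
      _ ≤ |b| + |∑ i ∈ s with ¬L ≤ k i, c i * (M : ℚ) ^ k i| := abs_sub _ _
      _ < 1 * (M : ℚ) ^ L := by linarith
  have : N = 0 := Int.abs_lt_one_iff.1 (by exact_mod_cast lt_of_mul_lt_mul_right hNlt hML.le)
  rw [← hN, this, Int.cast_zero, zero_mul]

theorem exists_finset_exponent_mem_or_subsum_eq_zero {M : ℕ} (hM : 1 < M) (c : ι → ℤ)
    (s : Finset ι) {b : ℚ} (hb : b ≠ 0) :
    ∃ T : Finset ℤ, ∀ k : ι → ℤ, ∑ i ∈ s, c i * (M : ℚ) ^ k i = b →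
      (∃ i ∈ s, k i ∈ T) ∨ ∃ J ⊂ s, J.Nonempty ∧ ∑ i ∈ J, c i * (M : ℚ) ^ k i = 0 := by
  have hM1 : (1 : ℚ) < M := by exact_mod_cast hM
  have hb0 : 0 < |b| := abs_pos.2 hb
  set C := ∑ i ∈ s, |(c i : ℚ)|
  obtain ⟨F, hF⟩ := pow_unbounded_of_one_lt (C / |b|) hM1
  obtain ⟨E, hE⟩ := pow_unbounded_of_one_lt (2 * |b|) hM1
  obtain ⟨G, hG⟩ := pow_unbounded_of_one_lt (2 * C) hM1
  refine ⟨Icc (-F) (#s * G + E), fun k hk => ?_⟩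
  have hs : s.Nonempty := nonempty_of_sum_ne_zero (hk.trans_ne hb)
  obtain ⟨i₁, hi₁, hmax⟩ := s.exists_max_image k hs
  -- `|b| ≤ C M ^ K` bounds the top exponent `K` from below
  have hK : -(F : ℤ) ≤ k i₁ := by
    have hbound : |b| ≤ C * (M : ℚ) ^ k i₁ := hk ▸ abs_sum_mul_zpow_le hM1.le _ k hmax
    have : (M : ℚ) ^ (-k i₁) < (M : ℚ) ^ (F : ℤ) := by
      rw [zpow_neg, zpow_natCast, inv_lt_iff_one_lt_mul₀ (zpow_pos (by positivity) _)]
      rw [div_lt_iff₀ hb0] at hF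
      nlinarith [zpow_pos (by positivity : (0:ℚ) < M) (k i₁)]
    linarith [(zpow_lt_zpow_iff_right₀ hM1).1 this]
  by_cases hKT : k i₁ ≤ #s * G + E
  · exact .inl ⟨i₁, hi₁, mem_Icc.2 ⟨hK, hKT⟩⟩
  obtain ⟨j, hj, hgap⟩ := exists_le_card_gap s k (k i₁) G
  have hL : (M : ℚ) ^ E ≤ (M : ℚ) ^ (k i₁ - j * G) := by
    rw [← zpow_natCast]
    refine zpow_le_zpow_right₀ hM1.le ?_
    have : (j : ℤ) * G ≤ #s * G := by gcongr
    omega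
  have hzero := sum_mul_zpow_eq_zero_of_gap (by omega) c k hk hgap (hE.trans_le hL)
    (by rwa [← zpow_natCast] at hG)
  refine .inr ⟨_, (filter_subset _ s).ssubset_of_ne fun hJ => hb ?_, ⟨i₁, ?_⟩, hzero⟩
  · rw [← hk, ← hJ, hzero]
  · exact mem_filter.2 ⟨hi₁, by nlinarith⟩

end Gap

abbrev Pattern (ι : Type*) := Finset (ι × ℚ) × Finset (ι × ι × ℚ)

namespace Pattern

variable {ι : Type*} (M : ℕ)

def IsAdmissible (p : Pattern ι) : Prop :=
  (∀ q ∈ p.1, q.2 ∈ cyclicPowers M) ∧ ∀ q ∈ p.2, q.2.2 ∈ cyclicPowers M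

def toSet (p : Pattern ι) : Set (ι → ℚ) :=
  {γ | (∀ i, γ i ∈ cyclicPowers M) ∧ (∀ q ∈ p.1, γ q.1 = q.2) ∧ ∀ q ∈ p.2, γ q.1 = q.2.2 * γ q.2.1}

variable {M} [DecidableEq ι]

theorem IsAdmissible.sup {p q : Pattern ι} (hp : p.IsAdmissible M) (hq : q.IsAdmissible M) :
    (p ⊔ q).IsAdmissible M :=
  ⟨forall_mem_union.2 ⟨hp.1, hq.1⟩, forall_mem_union.2 ⟨hp.2, hq.2⟩⟩

theorem toSet_sup (p q : Pattern ι) : (p ⊔ q).toSet M = p.toSet M ∩ q.toSet M := by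
  ext γ
  simp only [toSet, Prod.fst_sup, Prod.snd_sup, sup_eq_union, forall_mem_union,
    Set.mem_inter_iff, Set.mem_ofPred_eq]
  tauto

/-- The equations of `p` for `γ / γ i₀`, written as equations for `γ`. -/
def divBy (i₀ : ι) (p : Pattern ι) : Pattern ι :=
  (∅, p.1.image (fun q => (q.1, i₀, q.2)) ∪ p.2)

theorem IsAdmissible.divBy {p : Pattern ι} (hp : p.IsAdmissible M) (i₀ : ι) :
    (p.divBy i₀).IsAdmissible M :=
  ⟨by simp [Pattern.divBy], forall_mem_union.2 ⟨forall_mem_image.2 fun q hq => hp.1 q hq, hp.2⟩⟩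

theorem mem_toSet_divBy (hM : M ≠ 0) (p : Pattern ι) (i₀ : ι) (γ : ι → ℚ) :
    γ ∈ (p.divBy i₀).toSet M ↔
      (∀ i, γ i ∈ cyclicPowers M) ∧ (fun i => γ i / γ i₀) ∈ p.toSet M := by
  simp only [toSet, divBy, Set.mem_ofPred_eq, forall_mem_union, forall_mem_image, notMem_empty,
    IsEmpty.forall_iff, implies_true, true_and]
  refine and_congr_right fun hγ => ?_
  have h0 : γ i₀ ≠ 0 := cyclicPowers.ne_zero hM (hγ i₀)
  simp only [cyclicPowers.div_mem hM (hγ _) (hγ i₀), implies_true, true_and, div_eq_iff h0,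
    mul_assoc, div_mul_cancel₀ _ h0]

end Pattern

def IsPatternUnion {ι : Type*} (M : ℕ) (S : Set (ι → ℚ)) : Prop :=
  ∃ B : Finset (Pattern ι), (∀ p ∈ B, p.IsAdmissible M) ∧ S = ⋃ p ∈ B, p.toSet M

section PatternUnion

variable {ι : Type*} {M : ℕ}

theorem isPatternUnion_empty : IsPatternUnion M (∅ : Set (ι → ℚ)) := ⟨∅, by simp, by simp⟩

theorem Pattern.isPatternUnion_toSet {p : Pattern ι} (hp : p.IsAdmissible M) :
    IsPatternUnion M (p.toSet M) := ⟨{p}, by simpa using hp, by simp⟩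

namespace IsPatternUnion

variable [DecidableEq ι] {S T : Set (ι → ℚ)}

theorem union (hS : IsPatternUnion M S) (hT : IsPatternUnion M T) :
    IsPatternUnion M (S ∪ T) := by
  obtain ⟨B, hB, rfl⟩ := hS
  obtain ⟨C, hC, rfl⟩ := hT
  exact ⟨B ∪ C, forall_mem_union.2 ⟨hB, hC⟩, (set_biUnion_union _ _ _).symm⟩

theorem biUnion {κ : Type*} {t : Finset κ} {S : κ → Set (ι → ℚ)}
    (hS : ∀ x ∈ t, IsPatternUnion M (S x)) : IsPatternUnion M (⋃ x ∈ t, S x) := by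
  classical
  induction t using Finset.induction_on with
  | empty => simpa using isPatternUnion_empty
  | insert x t _ ih =>
    rw [set_biUnion_insert]
    exact (hS x (mem_insert_self x t)).union (ih fun y hy => hS y (mem_insert_of_mem hy))

theorem inter (hS : IsPatternUnion M S) (hT : IsPatternUnion M T) :
    IsPatternUnion M (S ∩ T) := by
  obtain ⟨B, hB, rfl⟩ := hS
  obtain ⟨C, hC, rfl⟩ := hT
  refine ⟨image₂ (· ⊔ ·) B C, ?_, ?_⟩
  · simp only [mem_image₂]
    rintro _ ⟨p, hp, q, hq, rfl⟩
    exact (hB p hp).sup (hC q hq)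
  · ext γ
    simp only [Set.mem_inter_iff, Set.mem_iUnion, exists_prop, mem_image₂]
    constructor
    · rintro ⟨⟨p, hp, hγp⟩, q, hq, hγq⟩
      exact ⟨p ⊔ q, ⟨p, hp, q, hq, rfl⟩, (Pattern.toSet_sup p q).symm ▸ ⟨hγp, hγq⟩⟩
    · rintro ⟨_, ⟨p, hp, q, hq, rfl⟩, hγ⟩
      rw [Pattern.toSet_sup] at hγ
      exact ⟨⟨p, hp, hγ.1⟩, q, hq, hγ.2⟩

theorem preimage_div (hM : M ≠ 0) (hS : IsPatternUnion M S) (i₀ : ι) :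
    IsPatternUnion M {γ | (∀ i, γ i ∈ cyclicPowers M) ∧ (fun i => γ i / γ i₀) ∈ S} := by
  obtain ⟨B, hB, rfl⟩ := hS
  refine ⟨B.image (Pattern.divBy i₀), forall_mem_image.2 fun p hp => (hB p hp).divBy i₀, ?_⟩
  ext γ
  simp only [Set.mem_ofPred_eq, Set.mem_iUnion, exists_prop, mem_image, exists_exists_and_eq_and,
    Pattern.mem_toSet_divBy hM]
  constructor
  · rintro ⟨hγ, p, hp, h⟩
    exact ⟨p, hp, hγ, h⟩
  · rintro ⟨p, hp, hγ, h⟩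
    exact ⟨hγ, p, hp, h⟩

end IsPatternUnion

end PatternUnion

section Solutions

variable {ι : Type*} {M : ℕ}

def solutions (M : ℕ) (c : ι → ℤ) (s : Finset ι) (b : ℚ) : Set (ι → ℚ) :=
  {γ | (∀ i, γ i ∈ cyclicPowers M) ∧ ∑ i ∈ s, c i * γ i = b}

theorem isPatternUnion_solutions_empty (c : ι → ℤ) (b : ℚ) :
    IsPatternUnion M (solutions M c ∅ b) := by
  by_cases hb : b = 0
  · convert Pattern.isPatternUnion_toSet (M := M) (p := ((∅, ∅) : Pattern ι)) ⟨by simp, by simp⟩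
    ext γ
    simp [solutions, Pattern.toSet, hb, eq_comm]
  · convert isPatternUnion_empty (M := M) (ι := ι)
    ext γ
    simp [solutions, Ne.symm hb]

theorem solutions_zero_eq [DecidableEq ι] (hM : M ≠ 0) (c : ι → ℤ) {s : Finset ι} {i₀ : ι}
    (hi₀ : i₀ ∈ s) :
    solutions M c s 0 = {γ | (∀ i, γ i ∈ cyclicPowers M) ∧
      (fun i => γ i / γ i₀) ∈ solutions M c (s.erase i₀) (-c i₀)} := by
  ext γ
  simp only [solutions, Set.mem_ofPred_eq]
  refine and_congr_right fun hγ => ?_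
  have h0 : γ i₀ ≠ 0 := cyclicPowers.ne_zero hM (hγ i₀)
  simp only [fun i => cyclicPowers.div_mem hM (hγ i) (hγ i₀), implies_true, true_and]
  simp only [← add_sum_erase s _ hi₀, ← mul_div_assoc, ← sum_div, div_eq_iff h0]
  constructor <;> intro h <;> linarith

theorem solutions_eq_union [DecidableEq ι] (c : ι → ℤ) (s : Finset ι) {b : ℚ} (T : Finset ℤ)
    (hT : ∀ k : ι → ℤ, ∑ i ∈ s, c i * (M : ℚ) ^ k i = b →
      (∃ i ∈ s, k i ∈ T) ∨ ∃ J ⊂ s, J.Nonempty ∧ ∑ i ∈ J, c i * (M : ℚ) ^ k i = 0) :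
    solutions M c s b =
      (⋃ i ∈ s, ⋃ t ∈ T, solutions M c (s.erase i) (b - c i * (M : ℚ) ^ t) ∩
        Pattern.toSet M ({(i, (M : ℚ) ^ t)}, ∅)) ∪
      ⋃ J ∈ {J ∈ s.ssubsets | J.Nonempty}, solutions M c J 0 ∩ solutions M c (s \ J) b := by
  ext γ
  simp only [Set.mem_union, Set.mem_iUnion, Set.mem_inter_iff, exists_prop, mem_filter,
    mem_ssubsets]
  constructor
  · rintro ⟨hγ, hsum⟩
    choose k hk using hγ
    obtain rfl : γ = fun i => (M : ℚ) ^ k i := funext hk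
    rcases hT k hsum with ⟨i, hi, ht⟩ | ⟨J, hJs, hJ, hJ0⟩
    · refine .inl ⟨i, hi, k i, ht, ⟨fun j => cyclicPowers.zpow_mem _, ?_⟩,
        fun j => cyclicPowers.zpow_mem _, by simp, by simp⟩
      rw [sum_erase_eq_sub hi, hsum]
    · refine .inr ⟨J, ⟨hJs, hJ⟩, ⟨fun j => cyclicPowers.zpow_mem _, hJ0⟩,
        fun j => cyclicPowers.zpow_mem _, ?_⟩
      rw [sum_sdiff_eq_sub hJs.subset, hsum, hJ0, sub_zero]
  · rintro (⟨i, hi, t, -, ⟨hγ, hsum⟩, -, hγi, -⟩ | ⟨J, ⟨hJs, -⟩, ⟨hγ, hJ0⟩, -, hsum⟩)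
    · refine ⟨hγ, ?_⟩
      rw [← add_sum_erase s _ hi, hsum, hγi (i, _) (mem_singleton_self _)]
      ring
    · refine ⟨hγ, ?_⟩
      rw [← sum_sdiff hJs.subset, hsum, hJ0, add_zero]

theorem isPatternUnion_solutions (hM : 1 < M) (c : ι → ℤ) (s : Finset ι) (b : ℚ) :
    IsPatternUnion M (solutions M c s b) := by
  classical
  induction s using Finset.strongInduction generalizing b with
  | H s ih =>
  rcases s.eq_empty_or_nonempty with rfl | ⟨i₀, hi₀⟩
  · exact isPatternUnion_solutions_empty c b
  by_cases hb : b = 0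
  · subst hb
    rw [solutions_zero_eq (by omega) c hi₀]
    exact IsPatternUnion.preimage_div (by omega) (ih _ (erase_ssubset hi₀) _) i₀
  obtain ⟨T, hT⟩ := exists_finset_exponent_mem_or_subsum_eq_zero hM c s hb
  rw [solutions_eq_union c s T hT]
  refine (IsPatternUnion.biUnion fun i hi => IsPatternUnion.biUnion fun t _ =>
      (ih _ (erase_ssubset hi) _).inter (Pattern.isPatternUnion_toSet ⟨?_, by simp⟩)).union
    (IsPatternUnion.biUnion fun J hJ => (ih J ?_ _).inter (ih _ ?_ _))
  · simpa using cyclicPowers.zpow_mem t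
  · exact mem_ssubsets.1 (mem_filter.1 hJ).1
  · obtain ⟨hJs, hJ⟩ := mem_filter.1 hJ
    exact sdiff_ssubset (mem_ssubsets.1 hJs).subset hJ

end Solutions

theorem exists_int_ne_zero_mul_eq_intCast {ι : Type*} [Finite ι] (c : ι → ℚ) :
    ∃ d : ℤ, d ≠ 0 ∧ ∃ a : ι → ℤ, ∀ i, (a i : ℚ) = d * c i := by
  obtain ⟨⟨d, hd⟩, h⟩ := IsLocalization.exist_integer_multiples_of_finite (nonZeroDivisors ℤ) c
  choose a ha using h
  exact ⟨d, nonZeroDivisors.ne_zero hd, a, fun i => by simpa using ha i⟩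

theorem mann_solution_set_cyclic_powers_general
    (M : ℕ) (hM : 2 ≤ M) (n : ℕ)
    (c : Fin n → ℚ) (c₀ : ℚ) :
    ∃ B : Finset (Finset (Fin n × ℚ) × Finset (Fin n × Fin n × ℚ)),
      (∀ p ∈ B, (∀ q ∈ p.1, q.2 ∈ cyclicPowers M) ∧
        (∀ q ∈ p.2, q.2.2 ∈ cyclicPowers M)) ∧
      {γ : Fin n → ℚ | (∀ i, γ i ∈ cyclicPowers M) ∧ ∑ i, c i * γ i = c₀} =
        ⋃ p ∈ B, {γ : Fin n → ℚ | (∀ i, γ i ∈ cyclicPowers M) ∧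
          (∀ q ∈ p.1, γ q.1 = q.2) ∧ (∀ q ∈ p.2, γ q.1 = q.2.2 * γ q.2.1)} := by
  obtain ⟨d, hd, a, ha⟩ := exists_int_ne_zero_mul_eq_intCast c
  obtain ⟨B, hB, hsol⟩ := isPatternUnion_solutions hM a univ (d * c₀)
  refine ⟨B, hB, Eq.trans ?_ hsol⟩
  ext γ
  simp only [solutions, Set.mem_ofPred_eq, ha, mul_assoc, ← mul_sum,
    mul_right_inj' (Int.cast_ne_zero.2 hd)]

/-- for an integer `M ≥ 2`, `Γ = M^ℤ ⊆ ℚ^×`, any nonzero linear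
polynomial `L(x) = ∑ c_i x_i` over `ℚ` and any `c ∈ ℚ`, the solution set
`{γ ∈ Γ^n : L(γ) = c}` is a finite union of sets each defined (inside `Γ^n`) by
finitely many equations of the form `x_i = γ` (`γ ∈ Γ`) and `x_j = δ·x_k`
(`δ ∈ Γ`). -/
theorem mann_solution_set_cyclic_powers
    (M : ℕ) (hM : 2 ≤ M) (n : ℕ)
    (c : Fin n → ℚ) (hc : ∃ i, c i ≠ 0) (c₀ : ℚ) :
    ∃ B : Finset (Finset (Fin n × ℚ) × Finset (Fin n × Fin n × ℚ)),
      (∀ p ∈ B, (∀ q ∈ p.1, q.2 ∈ cyclicPowers M) ∧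
        (∀ q ∈ p.2, q.2.2 ∈ cyclicPowers M)) ∧
      {γ : Fin n → ℚ | (∀ i, γ i ∈ cyclicPowers M) ∧ ∑ i, c i * γ i = c₀} =
        ⋃ p ∈ B, {γ : Fin n → ℚ | (∀ i, γ i ∈ cyclicPowers M) ∧
          (∀ q ∈ p.1, γ q.1 = q.2) ∧ (∀ q ∈ p.2, γ q.1 = q.2.2 * γ q.2.1)} :=
  mann_solution_set_cyclic_powers_general M hM n c c₀
end

section
/- Suppose a finitely generated subgroup Γ ≤ ℂ^× has the Mann property. Then for any nonzero linear L(x) = Σ c_i x_i over ℂ and any c ∈ ℂ, the set {γ ∈ Γ^n : L(γ) = c} is a finite union of sets defined by equations of the form x_i = γ and x_j = δ·x_k with γ, δ ∈ Γ. -/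
open Finset

def MannProperty (Γ : Subgroup ℂˣ) : Prop :=
  ∀ (n : ℕ) (c : Fin n → ℂ), (∀ i, c i ≠ 0) →
    {γ : Fin n → ℂˣ | (∀ i, γ i ∈ Γ) ∧ (∑ i, c i * (γ i : ℂ)) = 1 ∧
      ∀ s : Finset (Fin n), s.Nonempty → s ≠ Finset.univ →
        (∑ i ∈ s, c i * (γ i : ℂ)) ≠ 0}.Finite

private def cellSet (Γ : Subgroup ℂˣ) (n : ℕ)
    (p : Finset (Fin n × ℂˣ) × Finset (Fin n × Fin n × ℂˣ)) : Set (Fin n → ℂˣ) :=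
  {γ | (∀ i, γ i ∈ Γ) ∧ (∀ q ∈ p.1, γ q.1 = q.2) ∧ (∀ q ∈ p.2, γ q.1 = q.2.2 * γ q.2.1)}

private def IsGood (Γ : Subgroup ℂˣ) (n : ℕ) (S : Set (Fin n → ℂˣ)) : Prop :=
  ∃ B : Finset (Finset (Fin n × ℂˣ) × Finset (Fin n × Fin n × ℂˣ)),
    (∀ p ∈ B, (∀ q ∈ p.1, q.2 ∈ Γ) ∧ (∀ q ∈ p.2, q.2.2 ∈ Γ)) ∧
    S = ⋃ p ∈ B, cellSet Γ n p

variable {Γ : Subgroup ℂˣ} {n : ℕ}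

private lemma good_empty : IsGood Γ n ∅ := ⟨∅, by simp, by simp⟩

private lemma good_cell (p) (h1 : ∀ q ∈ p.1, q.2 ∈ Γ) (h2 : ∀ q ∈ p.2, q.2.2 ∈ Γ) :
    IsGood Γ n (cellSet Γ n p) :=
  ⟨{p}, by simp only [Finset.mem_singleton]; rintro _ rfl; exact ⟨h1, h2⟩, by simp⟩

private lemma good_union {S T : Set (Fin n → ℂˣ)} (hS : IsGood Γ n S) (hT : IsGood Γ n T) :
    IsGood Γ n (S ∪ T) := by
  obtain ⟨B, hB, rfl⟩ := hS
  obtain ⟨B', hB', rfl⟩ := hT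
  refine ⟨B ∪ B', fun p hp => ?_, by rw [Finset.set_biUnion_union]⟩
  rcases Finset.mem_union.1 hp with h | h
  exacts [hB p h, hB' p h]

private lemma good_biUnion {ι : Type*} [DecidableEq ι] {F : Finset ι} {f : ι → Set (Fin n → ℂˣ)}
    (h : ∀ x ∈ F, IsGood Γ n (f x)) : IsGood Γ n (⋃ x ∈ F, f x) := by
  classical
  induction F using Finset.induction with
  | empty => simpa using good_empty
  | @insert a s ha ih =>
    rw [Finset.set_biUnion_insert]
    exact good_union (h a (by simp)) (ih fun x hx => h x (by simp [hx]))

private lemma cell_inter (p p' : Finset (Fin n × ℂˣ) × Finset (Fin n × Fin n × ℂˣ)) :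
    cellSet Γ n p ∩ cellSet Γ n p' = cellSet Γ n (p.1 ∪ p'.1, p.2 ∪ p'.2) := by
  ext γ
  simp only [cellSet, Set.mem_inter_iff, Set.mem_setOf_eq, Finset.mem_union, or_imp, forall_and]
  tauto

private lemma good_inter {S T : Set (Fin n → ℂˣ)} (hS : IsGood Γ n S) (hT : IsGood Γ n T) :
    IsGood Γ n (S ∩ T) := by
  classical
  obtain ⟨B, hB, rfl⟩ := hS
  obtain ⟨B', hB', rfl⟩ := hT
  refine ⟨(B ×ˢ B').image fun r => (r.1.1 ∪ r.2.1, r.1.2 ∪ r.2.2), ?_, ?_⟩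
  · rintro p hp
    simp only [Finset.mem_image, Finset.mem_product] at hp
    obtain ⟨⟨a, b⟩, ⟨ha, hb⟩, rfl⟩ := hp
    constructor
    · intro q hq
      rcases Finset.mem_union.1 hq with h | h
      exacts [(hB a ha).1 q h, (hB' b hb).1 q h]
    · intro q hq
      rcases Finset.mem_union.1 hq with h | h
      exacts [(hB a ha).2 q h, (hB' b hb).2 q h]
  · ext γ
    simp only [Set.mem_inter_iff, Set.mem_iUnion, Finset.mem_image, Finset.mem_product,
      exists_prop]
    constructor
    · rintro ⟨⟨a, ha, hga⟩, ⟨b, hb, hgb⟩⟩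
      refine ⟨(a.1 ∪ b.1, a.2 ∪ b.2), ⟨⟨(a, b), ⟨ha, hb⟩, rfl⟩, ?_⟩⟩
      rw [← cell_inter]
      exact ⟨hga, hgb⟩
    · rintro ⟨p, ⟨⟨⟨a, b⟩, ⟨ha, hb⟩, rfl⟩, hg⟩⟩
      rw [← cell_inter] at hg
      exact ⟨⟨a, ha, hg.1⟩, ⟨b, hb, hg.2⟩⟩

open scoped Classical in
private lemma main_ind (Γ : Subgroup ℂˣ) (hMann : MannProperty Γ) (n : ℕ) :
    ∀ (N : ℕ) (c : Fin n → ℂ) (c₀ : ℂ),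
      (Finset.univ.filter fun i => c i ≠ 0).card ≤ N → (∃ i, c i ≠ 0) →
      IsGood Γ n {γ : Fin n → ℂˣ | (∀ i, γ i ∈ Γ) ∧ ∑ i, c i * (γ i : ℂ) = c₀} := by
  classical
  intro N
  induction N with
  | zero =>
    rintro c c₀ hcard ⟨i, hi⟩
    have hmem : i ∈ Finset.univ.filter fun i => c i ≠ 0 := by simp [hi]
    have := Finset.card_pos.2 ⟨i, hmem⟩
    omega
  | succ N IH =>
    rintro c c₀ hcard hc
    set supp := Finset.univ.filter fun i => c i ≠ 0 with hsupp_def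
    have hmem_supp : ∀ i, i ∈ supp ↔ c i ≠ 0 := fun i => by simp [hsupp_def]
    have hsuppsum : ∀ γ : Fin n → ℂˣ, ∑ i, c i * (γ i : ℂ) = ∑ i ∈ supp, c i * (γ i : ℂ) := by
      intro γ
      refine (Finset.sum_subset (Finset.subset_univ supp) fun i _ hi => ?_).symm
      have : c i = 0 := by by_contra h; exact hi ((hmem_supp i).2 h)
      simp [this]
    obtain ⟨i₀, hi₀⟩ := hc
    have hsupp_ne : supp.Nonempty := ⟨i₀, (hmem_supp i₀).2 hi₀⟩
    by_cases hc₀ : c₀ = 0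
    · subst hc₀
      by_cases hk1 : supp.card = 1
      · -- only one nonzero coefficient: no solutions
        obtain ⟨j, hj⟩ := Finset.card_eq_one.1 hk1
        refine ⟨∅, by simp, ?_⟩
        simp only [Finset.notMem_empty, Set.iUnion_of_empty, Set.iUnion_empty]
        ext γ
        simp only [Set.mem_setOf_eq, Set.mem_empty_iff_false, iff_false, not_and]
        intro hΓ
        rw [hsuppsum, hj, Finset.sum_singleton]
        have hcj : c j ≠ 0 := (hmem_supp j).1 (by simp [hj])
        exact mul_ne_zero hcj (Units.ne_zero _)
      · -- at least two nonzero coefficients: divide by γ j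
        obtain ⟨j, hj⟩ := hsupp_ne
        have hcj : c j ≠ 0 := (hmem_supp j).1 hj
        set c' : Fin n → ℂ := fun i => if i = j then 0 else c i with hc'_def
        have hfilter' : (Finset.univ.filter fun i => c' i ≠ 0) = supp.erase j := by
          ext i
          simp only [hc'_def, Finset.mem_filter, Finset.mem_univ, true_and,
            Finset.mem_erase, hmem_supp]
          constructor
          · intro h
            by_cases hij : i = j
            · simp [hij] at h
            · exact ⟨hij, by simpa [hij] using h⟩
          · rintro ⟨hij, hci⟩
            simpa [hij] using hci
        have hcard' : (Finset.univ.filter fun i => c' i ≠ 0).card ≤ N := by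
          rw [hfilter', Finset.card_erase_of_mem hj]
          omega
        have hc'ne : ∃ i, c' i ≠ 0 := by
          have hpos := Finset.card_pos.2 ⟨j, hj⟩
          have h2 : 2 ≤ supp.card := by omega
          have : (supp.erase j).Nonempty := by
            rw [← Finset.card_pos, Finset.card_erase_of_mem hj]
            omega
          obtain ⟨i, hi⟩ := this
          exact ⟨i, by rw [← hfilter'] at hi; exact (Finset.mem_filter.1 hi).2⟩
        obtain ⟨B', hB', hB'eq⟩ := IH c' (-(c j)) hcard' hc'ne
        -- key algebra
        have key : ∀ γ : Fin n → ℂˣ,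
            (∑ i, c' i * (((γ i * (γ j)⁻¹ : ℂˣ) : ℂ)) = -(c j)) ↔
            (∑ i, c i * (γ i : ℂ) = 0) := by
          intro γ
          have hgj : ((γ j : ℂ)) ≠ 0 := Units.ne_zero _
          have e0 : ∀ i, (((γ i * (γ j)⁻¹ : ℂˣ) : ℂ)) = (γ i : ℂ) * ((γ j : ℂ))⁻¹ := by
            intro i; push_cast; ring
          have e1 : ∑ i, c' i * (((γ i * (γ j)⁻¹ : ℂˣ) : ℂ)) =
              (∑ i, c' i * (γ i : ℂ)) * ((γ j : ℂ))⁻¹ := by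
            rw [Finset.sum_mul]
            exact Finset.sum_congr rfl fun i _ => by rw [e0, mul_assoc]
          have e2 : ∑ i, c' i * (γ i : ℂ) = (∑ i, c i * (γ i : ℂ)) - c j * (γ j : ℂ) := by
            have e3 : ∑ i, c' i * (γ i : ℂ) = ∑ i ∈ Finset.univ.erase j, c i * (γ i : ℂ) := by
              rw [← Finset.sum_subset (Finset.subset_univ (Finset.univ.erase j))
                (fun i _ hi => by
                  have : i = j := by simpa using hi
                  simp [hc'_def, this])]
              exact Finset.sum_congr rfl fun i hi => by
                rw [hc'_def]; simp only [if_neg (Finset.ne_of_mem_erase hi)]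
            rw [e3, Finset.sum_erase_eq_sub (Finset.mem_univ j)]
          rw [e1, e2, ← div_eq_mul_inv, div_eq_iff hgj, sub_eq_iff_eq_add]
          constructor <;> intro h <;> linear_combination h
        -- transform cells
        set F : Finset (Fin n × ℂˣ) × Finset (Fin n × Fin n × ℂˣ) →
            Finset (Fin n × ℂˣ) × Finset (Fin n × Fin n × ℂˣ) :=
          fun p => (∅, p.1.image (fun q => (q.1, j, q.2)) ∪
            p.2.image (fun q => (q.1, q.2.1, q.2.2))) with hF_def
        refine ⟨B'.image F, ?_, ?_⟩
        · intro p hp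
          obtain ⟨a, ha, rfl⟩ := Finset.mem_image.1 hp
          refine ⟨by simp [hF_def], ?_⟩
          intro q hq
          rcases Finset.mem_union.1 hq with h | h
          · obtain ⟨b, hb, rfl⟩ := Finset.mem_image.1 h
            exact (hB' a ha).1 b hb
          · obtain ⟨b, hb, rfl⟩ := Finset.mem_image.1 h
            exact (hB' a ha).2 b hb
        · ext γ
          simp only [Set.mem_setOf_eq, Set.mem_iUnion, exists_prop]
          constructor
          · rintro ⟨hΓ, hsum0⟩
            set δ : Fin n → ℂˣ := fun i => γ i * (γ j)⁻¹ with hδ_def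
            have hδΓ : ∀ i, δ i ∈ Γ := fun i => mul_mem (hΓ i) (inv_mem (hΓ j))
            have hδmem : δ ∈ {δ : Fin n → ℂˣ | (∀ i, δ i ∈ Γ) ∧
                ∑ i, c' i * (δ i : ℂ) = -(c j)} := ⟨hδΓ, (key γ).2 hsum0⟩
            rw [hB'eq] at hδmem
            obtain ⟨p, hp, hcell⟩ := Set.mem_iUnion₂.1 hδmem
            refine ⟨F p, Finset.mem_image_of_mem F hp, hΓ, by simp [hF_def], ?_⟩
            intro q hq
            rcases Finset.mem_union.1 hq with h | h
            · obtain ⟨b, hb, rfl⟩ := Finset.mem_image.1 h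
              have h1 : δ b.1 = b.2 := hcell.2.1 b hb
              show γ b.1 = b.2 * γ j
              rw [← h1, hδ_def]
              simp [mul_assoc]
            · obtain ⟨b, hb, rfl⟩ := Finset.mem_image.1 h
              have h1 : δ b.1 = b.2.2 * δ b.2.1 := hcell.2.2 b hb
              show γ b.1 = b.2.2 * γ b.2.1
              rw [hδ_def] at h1
              simp only [← mul_assoc] at h1
              exact mul_right_cancel h1
          · rintro ⟨p, hp, hΓ, _, hpair⟩
            obtain ⟨a, ha, rfl⟩ := Finset.mem_image.1 hp
            refine ⟨hΓ, (key γ).1 ?_⟩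
            set δ : Fin n → ℂˣ := fun i => γ i * (γ j)⁻¹ with hδ_def
            have hδΓ : ∀ i, δ i ∈ Γ := fun i => mul_mem (hΓ i) (inv_mem (hΓ j))
            have hδmem : δ ∈ ⋃ p ∈ B', cellSet Γ n p := by
              refine Set.mem_iUnion₂.2 ⟨a, ha, hδΓ, ?_, ?_⟩
              · intro q hq
                have : γ q.1 = q.2 * γ j := hpair (q.1, j, q.2)
                  (Finset.mem_union_left _ (Finset.mem_image.2 ⟨q, hq, rfl⟩))
                show γ q.1 * (γ j)⁻¹ = q.2
                rw [this]
                simp [mul_assoc]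
              · intro q hq
                have : γ q.1 = q.2.2 * γ q.2.1 := hpair (q.1, q.2.1, q.2.2)
                  (Finset.mem_union_right _ (Finset.mem_image.2 ⟨q, hq, rfl⟩))
                show γ q.1 * (γ j)⁻¹ = q.2.2 * (γ q.2.1 * (γ j)⁻¹)
                rw [this, mul_assoc]
            rw [← hB'eq] at hδmem
            exact hδmem.2
    · -- c₀ ≠ 0
      set k := supp.card with hk_def
      set o := supp.orderIsoOfFin hk_def.symm with ho_def
      set u : Fin k → Fin n := fun m => (o m : Fin n) with hu_def
      have huinj : Function.Injective u := fun a b h =>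
        o.injective (Subtype.ext h)
      have humem : ∀ m, u m ∈ supp := fun m => (o m).2
      have himg : Finset.image u Finset.univ = supp := by
        ext i
        simp only [Finset.mem_image, Finset.mem_univ, true_and]
        constructor
        · rintro ⟨m, rfl⟩; exact humem m
        · intro hi
          exact ⟨o.symm ⟨i, hi⟩, by simp [hu_def]⟩
      have hreix : ∀ f : Fin n → ℂ, ∑ i ∈ supp, f i = ∑ m, f (u m) := by
        intro f
        rw [← himg, Finset.sum_image fun a _ b _ h => huinj h]
      set c' : Fin k → ℂ := fun m => c (u m) / c₀ with hc'_def
      have hc'ne : ∀ m, c' m ≠ 0 :=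
        fun m => div_ne_zero ((hmem_supp _).1 (humem m)) hc₀
      set M := (hMann k c' hc'ne).toFinset with hM_def
      have hind : ∀ (t : Finset (Fin n)) (γ : Fin n → ℂˣ),
          ∑ i, (if i ∈ t then c i else 0) * (γ i : ℂ) = ∑ i ∈ t, c i * (γ i : ℂ) := by
        intro t γ
        rw [Finset.sum_congr rfl fun i (_ : i ∈ Finset.univ) =>
          (show (if i ∈ t then c i else 0) * (γ i : ℂ) = if i ∈ t then c i * (γ i : ℂ) else 0
            from by split <;> simp), Finset.sum_ite_mem, Finset.univ_inter]
      set D := supp.powerset.filter (fun s => s.Nonempty ∧ s ≠ supp) with hD_def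
      have hD_mem : ∀ s ∈ D, s ⊆ supp ∧ s.Nonempty ∧ s ≠ supp := by
        intro s hs
        have := Finset.mem_filter.1 hs
        exact ⟨Finset.mem_powerset.1 this.1, this.2.1, this.2.2⟩
      set U1 : Set (Fin n → ℂˣ) :=
        ⋃ δ ∈ M, cellSet Γ n (Finset.univ.image fun m => (u m, δ m), ∅) with hU1_def
      set U2 : Set (Fin n → ℂˣ) :=
        ⋃ s ∈ D, ({γ : Fin n → ℂˣ | (∀ i, γ i ∈ Γ) ∧
            ∑ i, (if i ∈ s then c i else 0) * (γ i : ℂ) = 0} ∩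
          {γ : Fin n → ℂˣ | (∀ i, γ i ∈ Γ) ∧
            ∑ i, (if i ∈ supp \ s then c i else 0) * (γ i : ℂ) = c₀}) with hU2_def
      have good1 : IsGood Γ n U1 := by
        refine good_biUnion fun δ hδ => good_cell _ ?_ (by simp)
        rintro q hq
        obtain ⟨m, _, rfl⟩ := Finset.mem_image.1 hq
        exact ((Set.Finite.mem_toFinset _).1 hδ).1 m
      have good2 : IsGood Γ n U2 := by
        refine good_biUnion fun s hs => ?_
        obtain ⟨hs_sub, hs_ne, hs_ne'⟩ := hD_mem s hs
        have hslt : s.card < supp.card :=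
          Finset.card_lt_card (Finset.ssubset_iff_subset_ne.2 ⟨hs_sub, hs_ne'⟩)
        refine good_inter ?_ ?_
        · refine IH (fun i => if i ∈ s then c i else 0) 0 ?_ ?_
          · have : (Finset.univ.filter fun i => (if i ∈ s then c i else 0) ≠ 0) = s := by
              ext i
              simp only [Finset.mem_filter, Finset.mem_univ, true_and]
              constructor
              · intro h
                by_cases his : i ∈ s
                · exact his
                · simp [his] at h
              · intro his
                simp only [if_pos his]
                exact (hmem_supp i).1 (hs_sub his)
            rw [this]; omega
          · obtain ⟨i, hi⟩ := hs_ne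
            exact ⟨i, by simp only [if_pos hi]; exact (hmem_supp i).1 (hs_sub hi)⟩
        · refine IH (fun i => if i ∈ supp \ s then c i else 0) c₀ ?_ ?_
          · have : (Finset.univ.filter fun i => (if i ∈ supp \ s then c i else 0) ≠ 0)
                = supp \ s := by
              ext i
              simp only [Finset.mem_filter, Finset.mem_univ, true_and]
              constructor
              · intro h
                by_cases his : i ∈ supp \ s
                · exact his
                · simp [his] at h
              · intro his
                simp only [if_pos his]
                exact (hmem_supp i).1 (Finset.mem_sdiff.1 his).1
            rw [this, Finset.card_sdiff_of_subset hs_sub]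
            have := Finset.card_pos.2 hs_ne
            omega
          · obtain ⟨i, hi, his⟩ := Finset.exists_of_ssubset
              (Finset.ssubset_iff_subset_ne.2 ⟨hs_sub, hs_ne'⟩)
            refine ⟨i, ?_⟩
            have : i ∈ supp \ s := Finset.mem_sdiff.2 ⟨hi, his⟩
            simp only [if_pos this]
            exact (hmem_supp i).1 hi
      have hseteq : {γ : Fin n → ℂˣ | (∀ i, γ i ∈ Γ) ∧ ∑ i, c i * (γ i : ℂ) = c₀}
          = U1 ∪ U2 := by
        ext γ
        constructor
        · rintro ⟨hΓ, hsum⟩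
          by_cases hdeg : ∃ s ∈ D, ∑ i ∈ s, c i * (γ i : ℂ) = 0
          · right
            obtain ⟨s, hsD, hs0⟩ := hdeg
            have hs_sub : s ⊆ supp := (hD_mem s hsD).1
            refine Set.mem_iUnion₂.2 ⟨s, hsD, ⟨hΓ, by rw [hind]; exact hs0⟩, hΓ, ?_⟩
            rw [hind]
            have hsd := Finset.sum_sdiff (f := fun i => c i * (γ i : ℂ)) hs_sub
            rw [hs0, add_zero] at hsd
            rw [hsd, ← hsuppsum]
            exact hsum
          · left
            set δ : Fin k → ℂˣ := fun m => γ (u m) with hδ_def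
            have hδM : δ ∈ M := by
              rw [hM_def, Set.Finite.mem_toFinset]
              refine ⟨fun m => hΓ _, ?_, ?_⟩
              · have e : ∑ m, c' m * (δ m : ℂ) = c₀⁻¹ * ∑ m, c (u m) * (γ (u m) : ℂ) := by
                  rw [Finset.mul_sum]
                  refine Finset.sum_congr rfl fun m _ => ?_
                  rw [hδ_def, hc'_def]
                  field_simp
                rw [e, ← hreix (fun i => c i * (γ i : ℂ)), ← hsuppsum, hsum,
                  inv_mul_cancel₀ hc₀]
              · intro t ht htuniv
                have himt : t.image u ∈ D := by
                  rw [hD_def]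
                  refine Finset.mem_filter.2 ⟨Finset.mem_powerset.2 ?_, ht.image u, ?_⟩
                  · rintro i hi
                    obtain ⟨m, _, rfl⟩ := Finset.mem_image.1 hi
                    exact humem m
                  · intro h
                    apply htuniv
                    have hcard2 : (t.image u).card = t.card :=
                      Finset.card_image_of_injective _ huinj
                    rw [h] at hcard2
                    refine Finset.eq_univ_of_card t ?_
                    rw [Fintype.card_fin]
                    omega
                have hne : ∑ i ∈ t.image u, c i * (γ i : ℂ) ≠ 0 :=
                  fun h0 => hdeg ⟨t.image u, himt, h0⟩
                intro h0
                apply hne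
                have e : ∑ m ∈ t, c' m * (δ m : ℂ)
                    = c₀⁻¹ * ∑ i ∈ t.image u, c i * (γ i : ℂ) := by
                  rw [Finset.sum_image fun a _ b _ h => huinj h, Finset.mul_sum]
                  refine Finset.sum_congr rfl fun m _ => ?_
                  rw [hδ_def, hc'_def]
                  field_simp
                rw [e] at h0
                exact (mul_eq_zero.1 h0).resolve_left (inv_ne_zero hc₀)
            refine Set.mem_iUnion₂.2 ⟨δ, hδM, hΓ, ?_, by simp⟩
            rintro q hq
            obtain ⟨m, _, rfl⟩ := Finset.mem_image.1 hq
            rfl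
        · rintro (h | h)
          · obtain ⟨δ, hδM, hΓ, hfix, -⟩ := Set.mem_iUnion₂.1 h
            refine ⟨hΓ, ?_⟩
            have hfix' : ∀ m, γ (u m) = δ m := fun m =>
              hfix (u m, δ m) (Finset.mem_image.2 ⟨m, Finset.mem_univ m, rfl⟩)
            have hδ := (Set.Finite.mem_toFinset _).1 hδM
            rw [hsuppsum, hreix (fun i => c i * (γ i : ℂ))]
            have e : ∑ m, c (u m) * (γ (u m) : ℂ) = c₀ * ∑ m, c' m * (δ m : ℂ) := by
              rw [Finset.mul_sum]
              refine Finset.sum_congr rfl fun m _ => ?_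
              rw [hfix' m, hc'_def]
              field_simp
            rw [e, hδ.2.1, mul_one]
          · obtain ⟨s, hsD, ⟨-, h0⟩, hΓ, h1⟩ := Set.mem_iUnion₂.1 h
            refine ⟨hΓ, ?_⟩
            rw [hind] at h0 h1
            have hs_sub : s ⊆ supp := (hD_mem s hsD).1
            rw [hsuppsum, ← Finset.sum_sdiff hs_sub, h0, h1, add_zero]
      rw [hseteq]
      exact good_union good1 good2

/-- Lemma 3.10 of the paper: if a finitely generated subgroup
`Γ ≤ ℂ^×` has the Mann property, then for any nonzero linear
`L(x) = ∑ c_i x_i` over `ℂ` and any `c ∈ ℂ`, the set `{γ ∈ Γ^n : L(γ) = c}` is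
a finite union of sets defined (inside `Γ^n`) by equations of the form
`x_i = γ` and `x_j = δ·x_k` with `γ, δ ∈ Γ`. -/
theorem mann_solution_set_structure
    (Γ : Subgroup ℂˣ) (hFG : Γ.FG) (hMann : MannProperty Γ)
    (n : ℕ) (c : Fin n → ℂ) (hc : ∃ i, c i ≠ 0) (c₀ : ℂ) :
    ∃ B : Finset (Finset (Fin n × ℂˣ) × Finset (Fin n × Fin n × ℂˣ)),
      (∀ p ∈ B, (∀ q ∈ p.1, q.2 ∈ Γ) ∧ (∀ q ∈ p.2, q.2.2 ∈ Γ)) ∧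
      {γ : Fin n → ℂˣ | (∀ i, γ i ∈ Γ) ∧ ∑ i, c i * (γ i : ℂ) = c₀} =
        ⋃ p ∈ B, {γ : Fin n → ℂˣ | (∀ i, γ i ∈ Γ) ∧
          (∀ q ∈ p.1, γ q.1 = q.2) ∧ (∀ q ∈ p.2, γ q.1 = q.2.2 * γ q.2.1)} := by
  classical
  obtain ⟨B, hB, hBeq⟩ := main_ind Γ hMann n
    (Finset.univ.filter fun i => c i ≠ 0).card c c₀ le_rfl hc
  exact ⟨B, hB, hBeq⟩
end

section
/- Let M ≥ 2 and let f(x)=λx^M with 0<|λ|<1, and a with 0<|a|<|λ|. If a nonzero power series G = Σ g_I x^I over the valuation ring vanishes at (f^{t_1}(a),…,f^{t_n}(a)), then there exist distinct multi-indices I ≠ J such that Σ_{i=1}^n (I_i−J_i)·M^{t_i}·[v(a)+v(λ)/(M−1)] = v(g_J)−v(g_I)+(|J|−|I|)·v(λ)/(1−M), where v is the additive valuation. -/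
/-!
Put `w(x) = v(x) + v(λ)/(M-1)`. Then `w(λx^M) = M·w(x)`, so the orbit points
`x_i = f^{t_i}(a)` have `v(x_i) = M^{t_i} w(a) - v(λ)/(M-1)`; since `|λ|, |a| ≤ 1` they lie in
the closed unit disc and the terms `g_I x^I` of `G(x)` tend to `0`. In an ultrametric space a
convergent sum of terms tending to `0` whose largest term is attained only once has the norm of
that term, so a vanishing sum with a nonzero term has two distinct terms `g_I x^I`, `g_J x^J` of
equal norm. Taking valuations of both and substituting the formula for `v(x_i)` gives the linear
relation.
-/

/-- The (real-valued) additive valuation associated to the norm: `v(x) = -log ‖x‖`. -/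
noncomputable def addVal {K : Type*} [NontriviallyNormedField K] (x : K) : ℝ :=
  -Real.log ‖x‖

open Filter Set Metric

lemma exists_forall_le_of_tendsto_cofinite {ι : Type*} [Nonempty ι] {f : ι → ℝ} {a : ℝ}
    (hfa : ∀ i, a ≤ f i) (hf : Tendsto f cofinite (nhds a)) : ∃ i, ∀ j, f j ≤ f i := by
  obtain ⟨y, hy, hmax⟩ := hf.isCompact_insert_range_of_cofinite.exists_isGreatest
    (insert_nonempty _ _)
  rcases hy with rfl | ⟨i, rfl⟩
  · obtain ⟨i⟩ := ‹Nonempty ι›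
    exact ⟨i, fun j => (hmax (mem_insert_of_mem _ ⟨j, rfl⟩)).trans (hfa i)⟩
  · exact ⟨i, fun j => hmax (mem_insert_of_mem _ ⟨j, rfl⟩)⟩

lemma Summable.exists_forall_norm_le {ι E : Type*} [SeminormedAddCommGroup E] [Nonempty ι]
    {h : ι → E} (hs : Summable h) : ∃ i, ∀ j, ‖h j‖ ≤ ‖h i‖ :=
  exists_forall_le_of_tendsto_cofinite (fun _ => norm_nonneg _)
    (tendsto_zero_iff_norm_tendsto_zero.mp hs.tendsto_cofinite_zero)

section Ultrametric

variable {ι E : Type*} [NormedAddCommGroup E] [IsUltrametricDist E] {h : ι → E}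

lemma Summable.norm_tsum_eq_of_forall_norm_lt (hs : Summable h) {i : ι}
    (hi : ∀ j ≠ i, ‖h j‖ < ‖h i‖) : ‖∑' j, h j‖ = ‖h i‖ := by
  classical
  have : Nonempty ι := ⟨i⟩
  have hrest := hasSum_ite_sub_hasSum hs.hasSum i
  obtain ⟨k, hk⟩ := hrest.summable.exists_forall_norm_le
  have hrest_le : ‖∑' j, h j - h i‖ ≤ ‖if k = i then 0 else h k‖ :=
    hrest.tsum_eq ▸ IsUltrametricDist.norm_tsum_le_of_forall_le_of_nonneg (norm_nonneg _) hk
  by_cases hki : k = i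
  · simp only [hki, if_true, norm_zero, norm_le_zero_iff, sub_eq_zero] at hrest_le
    rw [hrest_le]
  · rw [if_neg hki] at hrest_le
    have hlt : ‖∑' j, h j - h i‖ < ‖h i‖ := hrest_le.trans_lt (hi k hki)
    rw [← add_sub_cancel (h i) (∑' j, h j),
      IsUltrametricDist.norm_add_eq_max_of_norm_ne_norm hlt.ne', max_eq_left hlt.le]

lemma Summable.exists_ne_norm_eq_of_tsum_eq_zero (hs : Summable h) (hsum : ∑' i, h i = 0)
    {i₀ : ι} (hi₀ : h i₀ ≠ 0) : ∃ i j, i ≠ j ∧ h i ≠ 0 ∧ ‖h i‖ = ‖h j‖ := by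
  have : Nonempty ι := ⟨i₀⟩
  obtain ⟨i, hmax⟩ := hs.exists_forall_norm_le
  have hi : h i ≠ 0 := norm_pos_iff.mp ((norm_pos_iff.mpr hi₀).trans_le (hmax i₀))
  by_contra! hne
  have hlt : ∀ j ≠ i, ‖h j‖ < ‖h i‖ := fun j hj =>
    (hmax j).lt_of_ne fun hij => hne i j hj.symm hi hij.symm
  have hnorm := hs.norm_tsum_eq_of_forall_norm_lt hlt
  rw [hsum, norm_zero, eq_comm, norm_eq_zero] at hnorm
  exact hi hnorm

end Ultrametric

section NormedField

variable {K : Type*} [NormedField K]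

lemma norm_mul_prod_pow_le {ι : Type*} (s : Finset ι) (c : K) {x : ι → K}
    (hx : ∀ i ∈ s, ‖x i‖ ≤ 1) (e : ι → ℕ) : ‖c * ∏ i ∈ s, x i ^ e i‖ ≤ ‖c‖ := by
  rw [norm_mul, norm_prod]
  exact mul_le_of_le_one_right (norm_nonneg c) <| Finset.prod_le_one (fun i _ => by positivity)
    fun i hi => by rw [norm_pow]; exact pow_le_one₀ (norm_nonneg _) (hx i hi)

lemma mapsTo_mul_pow_ne_zero {lam : K} (hlam : lam ≠ 0) (M : ℕ) :
    MapsTo (fun x => lam * x ^ M) {x : K | x ≠ 0} {x | x ≠ 0} :=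
  fun _ hx => mul_ne_zero hlam (pow_ne_zero _ hx)

lemma mapsTo_mul_pow_closedBall {lam : K} (hlam : ‖lam‖ ≤ 1) (M : ℕ) :
    MapsTo (fun x => lam * x ^ M) (closedBall (0 : K) 1) (closedBall 0 1) := by
  intro x hx
  rw [mem_closedBall_zero_iff] at hx ⊢
  rw [norm_mul, norm_pow]
  exact mul_le_one₀ hlam (by positivity) (pow_le_one₀ (norm_nonneg _) hx)

end NormedField

section AddVal

variable {K : Type*} [NontriviallyNormedField K]

lemma addVal_mul {x y : K} (hx : x ≠ 0) (hy : y ≠ 0) :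
    addVal (x * y) = addVal x + addVal y := by
  simp only [addVal, norm_mul, Real.log_mul (norm_ne_zero_iff.mpr hx) (norm_ne_zero_iff.mpr hy),
    neg_add]

lemma addVal_pow (x : K) (m : ℕ) : addVal (x ^ m) = m * addVal x := by
  simp only [addVal, norm_pow, Real.log_pow, mul_neg]

lemma addVal_mul_prod_pow {ι : Type*} (s : Finset ι) {c : K} (hc : c ≠ 0) {x : ι → K}
    (hx : ∀ i ∈ s, x i ≠ 0) (e : ι → ℕ) :
    addVal (c * ∏ i ∈ s, x i ^ e i) = addVal c + ∑ i ∈ s, e i * addVal (x i) := by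
  have hpow : ∀ i ∈ s, x i ^ e i ≠ 0 := fun i hi => pow_ne_zero _ (hx i hi)
  rw [addVal_mul hc (Finset.prod_ne_zero_iff.mpr hpow), addVal, addVal, norm_prod,
    Real.log_prod fun i hi => norm_ne_zero_iff.mpr (hpow i hi), ← Finset.sum_neg_distrib]
  exact congrArg _ (Finset.sum_congr rfl fun i _ => by rw [← addVal, addVal_pow])

lemma addVal_iterate_mul_pow {lam : K} (hlam : lam ≠ 0) {M : ℕ} (hM : (M : ℝ) ≠ 1) {a : K}
    (ha : a ≠ 0) (s : ℕ) :
    addVal ((fun x => lam * x ^ M)^[s] a) + addVal lam / (M - 1)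
      = M ^ s * (addVal a + addVal lam / (M - 1)) := by
  induction s with
  | zero => simp
  | succ s ih =>
    have hs : (fun x => lam * x ^ M)^[s] a ≠ 0 := (mapsTo_mul_pow_ne_zero hlam M).iterate s ha
    rw [Function.iterate_succ_apply', addVal_mul hlam (pow_ne_zero _ hs), addVal_pow, pow_succ',
      mul_assoc, ← ih]
    have : (M : ℝ) - 1 ≠ 0 := sub_ne_zero.mpr hM
    field_simp
    ring

end AddVal

theorem orbit_relation_linear_equation_superattracting_general
    {K : Type*} [NontriviallyNormedField K] [IsUltrametricDist K] [CompleteSpace K]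
    (M : ℕ) (hM : 2 ≤ M)
    (lam a : K) (hl0 : 0 < ‖lam‖) (hl1 : ‖lam‖ < 1)
    (ha0 : 0 < ‖a‖) (ha : ‖a‖ < ‖lam‖)
    (F : K → K) (hF : ∀ x, F x = lam * x ^ M)
    (n : ℕ) (g : (Fin n → ℕ) → K)
    (hten : Filter.Tendsto (fun I => ‖g I‖) Filter.cofinite (nhds 0))
    (hGne : ∃ I, g I ≠ 0)
    (t : Fin n → ℕ)
    (hzero : ∑' I : Fin n → ℕ, g I * ∏ i, (F^[t i] a) ^ I i = 0) :
    ∃ I J : Fin n → ℕ, I ≠ J ∧ g I ≠ 0 ∧ g J ≠ 0 ∧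
      ∑ i, ((I i : ℝ) - (J i : ℝ)) * (M : ℝ) ^ t i *
          (addVal a + addVal lam / ((M : ℝ) - 1))
        = addVal (g J) - addVal (g I) +
          ((∑ i, (J i : ℝ)) - ∑ i, (I i : ℝ)) * (addVal lam / (1 - (M : ℝ))) := by
  obtain rfl : F = fun x => lam * x ^ M := funext hF
  have hlam : lam ≠ 0 := norm_pos_iff.mp hl0
  have hM1 : (M : ℝ) ≠ 1 := by norm_cast; omega
  set x : Fin n → K := fun i => (fun x => lam * x ^ M)^[t i] a
  have hx0 : ∀ i, x i ≠ 0 := fun i =>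
    (mapsTo_mul_pow_ne_zero hlam M).iterate _ (norm_pos_iff.mp ha0)
  have hx1 : ∀ i, ‖x i‖ ≤ 1 := fun i => mem_closedBall_zero_iff.mp <|
    (mapsTo_mul_pow_closedBall hl1.le M).iterate _ (mem_closedBall_zero_iff.mpr (ha.trans hl1).le)
  have hsummable : Summable fun I : Fin n → ℕ => g I * ∏ i, x i ^ I i :=
    NonarchimedeanAddGroup.summable_of_tendsto_cofinite_zero <|
      tendsto_zero_iff_norm_tendsto_zero.mpr <| squeeze_zero (fun _ => norm_nonneg _)
        (fun I => norm_mul_prod_pow_le _ _ (fun i _ => hx1 i) I) hten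
  obtain ⟨I₀, hI₀⟩ := hGne
  obtain ⟨I, J, hIJ, hI, hIJnorm⟩ := hsummable.exists_ne_norm_eq_of_tsum_eq_zero hzero
    (mul_ne_zero hI₀ (Finset.prod_ne_zero_iff.mpr fun i _ => pow_ne_zero _ (hx0 i)))
  have hgI : g I ≠ 0 := left_ne_zero_of_mul hI
  have hgJ : g J ≠ 0 :=
    left_ne_zero_of_mul (norm_ne_zero_iff.mp (hIJnorm ▸ norm_ne_zero_iff.mpr hI))
  have key : addVal (g I) + ∑ i, I i * addVal (x i) = addVal (g J) + ∑ i, J i * addVal (x i) := by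
    rw [← addVal_mul_prod_pow _ hgI (fun i _ => hx0 i),
      ← addVal_mul_prod_pow _ hgJ (fun i _ => hx0 i), addVal, addVal, hIJnorm]
  have haddVal_x : ∀ i, addVal (x i) = M ^ t i * (addVal a + addVal lam / (M - 1))
      - addVal lam / (M - 1) :=
    fun i => eq_sub_of_add_eq (addVal_iterate_mul_pow hlam hM1 (norm_pos_iff.mp ha0) (t i))
  refine ⟨I, J, hIJ, hgI, hgJ, ?_⟩
  rw [← neg_sub (M : ℝ) 1, div_neg]
  simp only [haddVal_x, mul_sub, sub_mul, ← mul_assoc, Finset.sum_sub_distrib, ← Finset.sum_mul]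
    at key ⊢
  linarith

/-- superattracting case, `f(x) = λx^M` with `M ≥ 2`: if a
nonzero power series `G = ∑ g_I x^I` over the valuation ring vanishes at the
orbit point `(f^{t₁}(a),…,f^{t_n}(a))`, then there are distinct multi-indices
`I ≠ J` with
`∑ (I_i−J_i)·M^{t_i}·[v(a)+v(λ)/(M−1)] = v(g_J)−v(g_I)+(|J|−|I|)·v(λ)/(1−M)`. -/
theorem orbit_relation_linear_equation_superattracting
    {K : Type*} [NontriviallyNormedField K] [IsUltrametricDist K] [CompleteSpace K]
    (M : ℕ) (hM : 2 ≤ M)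
    (lam a : K) (hl0 : 0 < ‖lam‖) (hl1 : ‖lam‖ < 1)
    (ha0 : 0 < ‖a‖) (ha : ‖a‖ < ‖lam‖)
    (F : K → K) (hF : ∀ x, F x = lam * x ^ M)
    (n : ℕ) (g : (Fin n → ℕ) → K) (hg : ∀ I, ‖g I‖ ≤ 1)
    (hten : Filter.Tendsto (fun I => ‖g I‖) Filter.cofinite (nhds 0))
    (hGne : ∃ I, g I ≠ 0)
    (t : Fin n → ℕ)
    (hzero : ∑' I : Fin n → ℕ, g I * ∏ i, (F^[t i] a) ^ I i = 0) :
    ∃ I J : Fin n → ℕ, I ≠ J ∧ g I ≠ 0 ∧ g J ≠ 0 ∧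
      ∑ i, ((I i : ℝ) - (J i : ℝ)) * (M : ℝ) ^ t i *
          (addVal a + addVal lam / ((M : ℝ) - 1))
        = addVal (g J) - addVal (g I) +
          ((∑ i, (J i : ℝ)) - ∑ i, (I i : ℝ)) * (addVal lam / (1 - (M : ℝ))) :=
  orbit_relation_linear_equation_superattracting_general M hM lam a hl0 hl1 ha0 ha F hF n g hten
    hGne t hzero
end

section
/- A nonempty iterational special variety X ⊆ B_n is isomorphic as an analytic space to a polydisc B_{|G|} where G = {k : no equation x_k = f^m(a) or x_k = f^ℓ(x_j) constrains coordinate k}; in particular X is irreducible, and X ∩ O_f(a)^n = {(f^{t_1}(a),…,f^{t_n}(a)) : t_i = m_i for i ∈ I', t_k = t_j + ℓ_{(j,k)} for (j,k) ∈ J'}. -/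
/-! The equations are triangular: along the rank `r`, every coordinate is either fixed, or an
iterate of `f` applied to a coordinate of smaller rank, or free. Induction on the rank shows that
a point of `X` is determined by its free coordinates, and recursion on the rank rebuilds a point
of `X` from arbitrary free coordinates in the unit disc, because `f` maps the disc into itself.
On the orbit of `a`, injectivity of `s ↦ f^s(a)` turns `x_j = f^ℓ(x_k)` into `t_j = t_k + ℓ`. -/

open Function Set

namespace TriangularSystem

variable {ι α : Type*} (I : Set ι) (c : ι → α) (J : Set (ι × ι)) (g : ι × ι → α → α)

def IsSolution (x : ι → α) : Prop :=
  (∀ i ∈ I, x i = c i) ∧ ∀ p ∈ J, x p.1 = g p (x p.2)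

def IsFree (k : ι) : Prop :=
  k ∉ I ∧ ∀ p ∈ J, p.1 ≠ k

open Classical in
/-- Back-substitution along the rank `r`; only the free coordinates of `y` are read. -/
noncomputable def solve {r : ι → ℕ} (hr : ∀ p ∈ J, r p.2 < r p.1) (y : ι → α) (k : ι) : α :=
  if k ∈ I then c k
  else if h : ∃ p ∈ J, p.1 = k then g h.choose (solve hr y h.choose.2)
  else y k
termination_by r k
decreasing_by
  have := hr _ h.choose_spec.1
  rwa [h.choose_spec.2] at this

section Rank

variable {I J} {r : ι → ℕ} (hr : ∀ p ∈ J, r p.2 < r p.1)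
include hr

theorem rank_induction {P : ι → Prop} (hI : ∀ i ∈ I, P i) (hJ : ∀ p ∈ J, P p.2 → P p.1)
    (hfree : ∀ k, IsFree I J k → P k) (k : ι) : P k := by
  induction hk : r k using Nat.strong_induction_on generalizing k with
  | _ N ih =>
    by_cases hkI : k ∈ I
    · exact hI k hkI
    by_cases hkJ : ∃ p ∈ J, p.1 = k
    · obtain ⟨p, hp, rfl⟩ := hkJ
      exact hJ p hp (ih _ (hk ▸ hr p hp) _ rfl)
    · exact hfree k ⟨hkI, fun p hp h => hkJ ⟨p, hp, h⟩⟩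

theorem eq_of_isSolution_of_eqOn_isFree {x x' : ι → α} (hx : IsSolution I c J g x)
    (hx' : IsSolution I c J g x') (hfree : ∀ k, IsFree I J k → x k = x' k) : x = x' :=
  funext <| rank_induction hr (fun i hi => (hx.1 i hi).trans (hx'.1 i hi).symm)
    (fun p hp h => by rw [hx.2 p hp, hx'.2 p hp, h]) hfree

theorem mem_of_isSolution {S : Set α} (hc : ∀ i ∈ I, c i ∈ S) (hg : ∀ p ∈ J, MapsTo (g p) S S)
    {x : ι → α} (hx : IsSolution I c J g x) (hfree : ∀ k, IsFree I J k → x k ∈ S) (k : ι) :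
    x k ∈ S :=
  rank_induction hr (fun i hi => hx.1 i hi ▸ hc i hi) (fun p hp h => hx.2 p hp ▸ hg p hp h)
    hfree k

theorem solve_isSolution (hfun : ∀ p ∈ J, ∀ q ∈ J, p.1 = q.1 → p = q)
    (hdisj : ∀ i ∈ I, ∀ p ∈ J, p.1 ≠ i) (y : ι → α) : IsSolution I c J g (solve I c J g hr y) := by
  refine ⟨fun i hi => by rw [solve, if_pos hi], fun p hp => ?_⟩
  have hex : ∃ q ∈ J, q.1 = p.1 := ⟨p, hp, rfl⟩
  rw [solve, if_neg fun hi => hdisj _ hi p hp rfl, dif_pos hex,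
    hfun _ hex.choose_spec.1 p hp hex.choose_spec.2]

theorem solve_of_isFree (y : ι → α) {k : ι} (hk : IsFree I J k) : solve I c J g hr y k = y k := by
  rw [solve, if_neg hk.1, dif_neg fun ⟨p, hp, h⟩ => hk.2 p hp h]

theorem exists_equiv_free (hfun : ∀ p ∈ J, ∀ q ∈ J, p.1 = q.1 → p = q)
    (hdisj : ∀ i ∈ I, ∀ p ∈ J, p.1 ≠ i) {S : Set α} (hc : ∀ i ∈ I, c i ∈ S)
    (hg : ∀ p ∈ J, MapsTo (g p) S S) {F : Set ι} (hF : ∀ k, k ∈ F ↔ IsFree I J k) :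
    ∃ e : {x : ι → α // (∀ i, x i ∈ S) ∧ IsSolution I c J g x} ≃ {y : F → α // ∀ k, y k ∈ S},
      ∀ x k, (e x).1 k = x.1 k := by
  let res (x : {x : ι → α // (∀ i, x i ∈ S) ∧ IsSolution I c J g x}) :
      {y : F → α // ∀ k, y k ∈ S} :=
    ⟨fun k => x.1 k, fun k => x.2.1 k⟩
  refine ⟨Equiv.ofBijective res ⟨?_, ?_⟩, fun _ _ => rfl⟩
  · intro ⟨x, _, hx⟩ ⟨x', _, hx'⟩ h
    exact Subtype.ext <| eq_of_isSolution_of_eqOn_isFree c g hr hx hx' fun k hk =>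
      congr_fun (congrArg Subtype.val h) ⟨k, (hF k).2 hk⟩
  · rintro ⟨y, hy⟩
    let z := solve I c J g hr (extend Subtype.val y c)
    have hz (k : F) : z k = y k :=
      (solve_of_isFree c g hr _ ((hF k).1 k.2)).trans (Subtype.val_injective.extend_apply y c k)
    refine ⟨⟨z, mem_of_isSolution c g hr hc hg (solve_isSolution c g hr hfun hdisj _)
      fun k hk => hz ⟨k, (hF k).2 hk⟩ ▸ hy _, solve_isSolution c g hr hfun hdisj _⟩,
      Subtype.ext (funext hz)⟩

end Rank

section Orbit

variable {I J} {f : α → α} {a : α} (horb : Injective fun s : ℕ => f^[s] a)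
  (m : ι → ℕ) (ℓ : ι × ι → ℕ)
include horb

theorem isSolution_iterate_iff (t : ι → ℕ) :
    IsSolution I (fun i => f^[m i] a) J (fun p => f^[ℓ p]) (fun i => f^[t i] a) ↔
      (∀ i ∈ I, t i = m i) ∧ ∀ p ∈ J, t p.1 = t p.2 + ℓ p := by
  simp only [IsSolution, ← iterate_add_apply, horb.eq_iff, Nat.add_comm (ℓ _)]

theorem setOf_isSolution_inter_orbit {S : Set α} (hS : ∀ s, f^[s] a ∈ S) :
    {x : ι → α | ((∀ i, x i ∈ S) ∧ IsSolution I (fun i => f^[m i] a) J (fun p => f^[ℓ p]) x) ∧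
        ∀ i, ∃ s, x i = f^[s] a} =
      {x | ∃ t : ι → ℕ, (∀ i ∈ I, t i = m i) ∧ (∀ p ∈ J, t p.1 = t p.2 + ℓ p) ∧
        x = fun i => f^[t i] a} := by
  ext x
  constructor
  · rintro ⟨⟨-, hx⟩, hxorb⟩
    choose t ht using hxorb
    obtain rfl : x = fun i => f^[t i] a := funext ht
    obtain ⟨hI, hJ⟩ := (isSolution_iterate_iff horb m ℓ t).1 hx
    exact ⟨t, hI, hJ, rfl⟩
  · rintro ⟨t, hI, hJ, rfl⟩
    exact ⟨⟨fun i => hS _, (isSolution_iterate_iff horb m ℓ t).2 ⟨hI, hJ⟩⟩, fun i => ⟨t i, rfl⟩⟩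

end Orbit

end TriangularSystem

theorem iterational_special_variety_structure_general
    {K : Type*} [NontriviallyNormedField K]
    (f : K → K) (hf : ∀ x : K, ‖x‖ ≤ 1 → ‖f x‖ ≤ 1)
    (a : K) (ha : ‖a‖ ≤ 1)
    (horb : Function.Injective fun s : ℕ => f^[s] a)
    (n : ℕ) (I' : Finset (Fin n)) (m : Fin n → ℕ)
    (J' : Finset (Fin n × Fin n)) (ℓ : Fin n × Fin n → ℕ)
    (hfun : ∀ p ∈ J', ∀ q ∈ J', p.1 = q.1 → p = q)
    (hdisj : ∀ i ∈ I', ∀ p ∈ J', p.1 ≠ i)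
    (r : Fin n → ℕ) (hacyc : ∀ p ∈ J', r p.2 < r p.1)
    (X : Set (Fin n → K))
    (hX : X = {x : Fin n → K | (∀ i, ‖x i‖ ≤ 1) ∧ (∀ i ∈ I', x i = f^[m i] a) ∧
      ∀ p ∈ J', x p.1 = f^[ℓ p] (x p.2)})
    (G : Finset (Fin n))
    (hG : G = Finset.univ.filter fun k => k ∉ I' ∧ ∀ p ∈ J', p.1 ≠ k) :
    (∃ e : X ≃ {y : {k : Fin n // k ∈ G} → K // ∀ k, ‖y k‖ ≤ 1},
      ∀ (x : X) (k : {k : Fin n // k ∈ G}), (e x).1 k = x.1 k.1) ∧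
    {x ∈ X | ∀ i, ∃ s : ℕ, x i = f^[s] a} =
      {x : Fin n → K | ∃ t : Fin n → ℕ, (∀ i ∈ I', t i = m i) ∧
        (∀ p ∈ J', t p.1 = t p.2 + ℓ p) ∧ x = fun i => f^[t i] a} := by
  subst hX
  have hdisc : MapsTo f {z : K | ‖z‖ ≤ 1} {z | ‖z‖ ≤ 1} := hf
  have horbit (s : ℕ) : f^[s] a ∈ {z : K | ‖z‖ ≤ 1} := hdisc.iterate s ha
  refine ⟨?_, TriangularSystem.setOf_isSolution_inter_orbit horb m ℓ horbit⟩
  exact TriangularSystem.exists_equiv_free (I := ↑I') (J := ↑J') _ _ hacyc hfun hdisj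
    (fun i _ => horbit (m i)) (fun p _ => hdisc.iterate (ℓ p)) (F := ↑G)
    fun k => by simp [hG, TriangularSystem.IsFree]

/-- Proposition 3.4 of the paper: a nonempty iterational special
variety `X ⊆ B_n` — the subset of the closed unit polydisc cut out by equations
`x_i = f^{m_i}(a)` (`i ∈ I'`) and `x_j = f^{ℓ_{(j,k)}}(x_k)` (`(j,k) ∈ J'`),
given in canonical (triangular) form: each coordinate is constrained by at most
one equation and the dependency graph is acyclic — is isomorphic, via the
coordinate projection, to the polydisc `B_{|G|}` on the unconstrained
coordinates `G` (in particular it is irreducible); and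
`X ∩ O_f(a)^n = {(f^{t₁}(a),…,f^{t_n}(a)) : t_i = m_i for i ∈ I',
t_j = t_k + ℓ_{(j,k)} for (j,k) ∈ J'}`. -/
theorem iterational_special_variety_structure
    {K : Type*} [NontriviallyNormedField K] [IsUltrametricDist K] [CompleteSpace K]
    (f : K → K) (hf : ∀ x : K, ‖x‖ ≤ 1 → ‖f x‖ ≤ 1)
    (a : K) (ha : ‖a‖ ≤ 1)
    (horb : Function.Injective fun s : ℕ => f^[s] a)
    (n : ℕ) (I' : Finset (Fin n)) (m : Fin n → ℕ)
    (J' : Finset (Fin n × Fin n)) (ℓ : Fin n × Fin n → ℕ)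
    (hfun : ∀ p ∈ J', ∀ q ∈ J', p.1 = q.1 → p = q)
    (hdisj : ∀ i ∈ I', ∀ p ∈ J', p.1 ≠ i)
    (r : Fin n → ℕ) (hacyc : ∀ p ∈ J', r p.2 < r p.1)
    (X : Set (Fin n → K))
    (hX : X = {x : Fin n → K | (∀ i, ‖x i‖ ≤ 1) ∧ (∀ i ∈ I', x i = f^[m i] a) ∧
      ∀ p ∈ J', x p.1 = f^[ℓ p] (x p.2)})
    (G : Finset (Fin n))
    (hG : G = Finset.univ.filter fun k => k ∉ I' ∧ ∀ p ∈ J', p.1 ≠ k) :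
    (∃ e : X ≃ {y : {k : Fin n // k ∈ G} → K // ∀ k, ‖y k‖ ≤ 1},
      ∀ (x : X) (k : {k : Fin n // k ∈ G}), (e x).1 k = x.1 k.1) ∧
    {x ∈ X | ∀ i, ∃ s : ℕ, x i = f^[s] a} =
      {x : Fin n → K | ∃ t : Fin n → ℕ, (∀ i ∈ I', t i = m i) ∧
        (∀ p ∈ J', t p.1 = t p.2 + ℓ p) ∧ x = fun i => f^[t i] a} :=
  iterational_special_variety_structure_general f hf a ha horb n I' m J' ℓ hfun hdisj r hacyc X hX G
    hG
end
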